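/- arXiv:1706.08401 — 10 statements merged into one kernel-verified Lean document; each statement's English description precedes it below -/
import Mathlib

section
/- Branching bisimilarity is an equivalence relation on the states of any labelled transition system. -/
/-- `s →(a) t`: either a real `a`-step, or `a = τ` and `s = t`. -/
def OptStep {S A : Type*} (tr : S → A → S → Prop) (tau : A)
    (s : S) (a : A) (t : S) : Prop :=
  tr s a t ∨ (a = tau ∧ s = t)

/-- Reflexive-transitive closure of τ-steps. -/
def TauReach {S A : Type*} (tr : S → A → S → Prop) (tau : A) : S → S → Prop :=
  Relation.ReflTransGen (fun s t => tr s tau t)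

/-- A symmetric relation `R` is a branching bisimulation. -/
def IsBranchingBisim {S A : Type*} (tr : S → A → S → Prop) (dn : S → Prop)
    (tau : A) (R : S → S → Prop) : Prop :=
  Symmetric R ∧ ∀ s t, R s t →
    (∀ a s', tr s a s' →
      ∃ t'' t', TauReach tr tau t t'' ∧ OptStep tr tau t'' a t' ∧
        R s t'' ∧ R s' t') ∧
    (dn s → ∃ t', TauReach tr tau t t' ∧ dn t')

/-- Branching bisimilarity. -/
def BranchingBisimilar {S A : Type*} (tr : S → A → S → Prop) (dn : S → Prop)
    (tau : A) (s t : S) : Prop :=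
  ∃ R, IsBranchingBisim tr dn tau R ∧ R s t

lemma optStep_reach {S A : Type*} {tr : S → A → S → Prop} {tau : A}
    {s t u : S} (h1 : TauReach tr tau s t) (h2 : OptStep tr tau t tau u) :
    TauReach tr tau s u := by
  rcases h2 with h | ⟨_, rfl⟩
  · exact h1.tail h
  · exact h1

lemma tau_transfer {S A : Type*} {tr : S → A → S → Prop} {dn : S → Prop} {tau : A}
    {R : S → S → Prop} (hR : IsBranchingBisim tr dn tau R)
    {u u' t : S} (hru : R u t) (h : TauReach tr tau u u') :
    ∃ t', TauReach tr tau t t' ∧ R u' t' := by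
  induction h with
  | refl => exact ⟨t, Relation.ReflTransGen.refl, hru⟩
  | tail _ hlast ih =>
      obtain ⟨t0, ht0, hr0⟩ := ih
      obtain ⟨t'', t', h1, h2, _, h4⟩ := ((hR.2 _ _ hr0).1 _ _ hlast)
      exact ⟨t', optStep_reach (ht0.trans h1) h2, h4⟩

lemma comp_step {S A : Type*} {tr : S → A → S → Prop} {dn : S → Prop} {tau : A}
    {R Q : S → S → Prop} (hR : IsBranchingBisim tr dn tau R)
    (hQ : IsBranchingBisim tr dn tau Q)
    {s u t : S} (hsu : R s u) (hut : Q u t) {a : A} {s' : S} (hstep : tr s a s') :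
    ∃ t'' t', TauReach tr tau t t'' ∧ OptStep tr tau t'' a t' ∧
      (∃ v, R s v ∧ Q v t'') ∧ (∃ v, R s' v ∧ Q v t') := by
  obtain ⟨u'', u', hu1, hu2, hu3, hu4⟩ := (hR.2 _ _ hsu).1 _ _ hstep
  obtain ⟨t0, ht0, hq0⟩ := tau_transfer hQ hut hu1
  rcases hu2 with hreal | ⟨rfl, rfl⟩
  · obtain ⟨t'', t', h1, h2, h3, h4⟩ := (hQ.2 _ _ hq0).1 _ _ hreal
    exact ⟨t'', t', ht0.trans h1, h2, ⟨u'', hu3, h3⟩, ⟨u', hu4, h4⟩⟩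
  · exact ⟨t0, t0, ht0, Or.inr ⟨rfl, rfl⟩, ⟨u'', hu3, hq0⟩, ⟨u'', hu4, hq0⟩⟩

lemma comp_dn {S A : Type*} {tr : S → A → S → Prop} {dn : S → Prop} {tau : A}
    {R Q : S → S → Prop} (hR : IsBranchingBisim tr dn tau R)
    (hQ : IsBranchingBisim tr dn tau Q)
    {s u t : S} (hsu : R s u) (hut : Q u t) (hd : dn s) :
    ∃ t', TauReach tr tau t t' ∧ dn t' := by
  obtain ⟨u', hu1, hu2⟩ := (hR.2 _ _ hsu).2 hd
  obtain ⟨t0, ht0, hq0⟩ := tau_transfer hQ hut hu1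
  obtain ⟨t', ht1, ht2⟩ := (hQ.2 _ _ hq0).2 hu2
  exact ⟨t', ht0.trans ht1, ht2⟩

/-- Branching bisimilarity is an equivalence relation on the states of any
labelled transition system. -/
theorem branchingBisimilar_equivalence {S A : Type*} (tr : S → A → S → Prop)
    (dn : S → Prop) (tau : A) :
    Equivalence (BranchingBisimilar tr dn tau) := by
  constructor
  · intro s
    refine ⟨Eq, ⟨fun _ _ h => h.symm, ?_⟩, rfl⟩
    rintro s t rfl
    constructor
    · intro a s' h
      exact ⟨s, s', Relation.ReflTransGen.refl, Or.inl h, rfl, rfl⟩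
    · intro hd
      exact ⟨s, Relation.ReflTransGen.refl, hd⟩
  · rintro s t ⟨R, hR, hst⟩
    exact ⟨R, hR, hR.1 hst⟩
  · rintro s u t ⟨R, hR, hsu⟩ ⟨Q, hQ, hut⟩
    refine ⟨fun x y => (∃ v, R x v ∧ Q v y) ∨ (∃ v, Q x v ∧ R v y),
      ⟨?_, ?_⟩, Or.inl ⟨u, hsu, hut⟩⟩
    · rintro x y (⟨v, h1, h2⟩ | ⟨v, h1, h2⟩)
      · exact Or.inr ⟨v, hQ.1 h2, hR.1 h1⟩
      · exact Or.inl ⟨v, hR.1 h2, hQ.1 h1⟩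
    · rintro x y (⟨v, h1, h2⟩ | ⟨v, h1, h2⟩)
      · constructor
        · intro a s' hstep
          obtain ⟨t'', t', ha, hb, hc, hd⟩ := comp_step hR hQ h1 h2 hstep
          exact ⟨t'', t', ha, hb, Or.inl hc, Or.inl hd⟩
        · exact comp_dn hR hQ h1 h2
      · constructor
        · intro a s' hstep
          obtain ⟨t'', t', ha, hb, hc, hd⟩ := comp_step hQ hR h1 h2 hstep
          exact ⟨t'', t', ha, hb, Or.inr hc, Or.inr hd⟩
        · exact comp_dn hQ hR h1 h2
end

section
/- Rooted divergence-preserving branching bisimilarity is a congruence with respect to alternative composition (choice): if P1 ⇆Δ Q1 and P2 ⇆Δ Q2, then P1 + P2 ⇆Δ Q1 + Q2. -/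
namespace TCPRev

/-- Actions: receive `c?d`, send `c!d`, and the internal action `τ`. -/
inductive Act (C D : Type) : Type
  | recv : C → D → Act C D
  | send : C → D → Act C D
  | tau : Act C D

/-- `a ∈ I_C'`: the communication actions over channels in `Cs`. -/
def Act.inIC {C D : Type} (Cs : Set C) : Act C D → Prop
  | .recv c _ => c ∈ Cs
  | .send c _ => c ∈ Cs
  | .tau => False

/-- Process expressions of TCP• (with iteration and nesting). -/
inductive Proc (C D : Type) : Type
  | zero : Proc C D
  | one : Proc C D
  | act : Act C D → Proc C D → Proc C D
  | seq : Proc C D → Proc C D → Proc C D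
  | alt : Proc C D → Proc C D → Proc C D
  | par : Set C → Proc C D → Proc C D → Proc C D
  | star : Proc C D → Proc C D
  | nest : Proc C D → Proc C D → Proc C D

variable {C D : Type}

/-- Termination predicate `P ↓`. -/
def Proc.term : Proc C D → Prop
  | .zero => False
  | .one => True
  | .act _ _ => False
  | .seq p q => p.term ∧ q.term
  | .alt p q => p.term ∨ q.term
  | .par _ p q => p.term ∧ q.term
  | .star _ => True
  | .nest _ q => q.term

/-- The transition relation of TCP• under the revised operational semantics of
sequential composition: `P₁ • P₂` may only move in its second component when
`P₁ ↓` and `P₁` has no outgoing transitions. -/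
def Tr : Proc C D → Act C D → Proc C D → Prop
  | .zero, _, _ => False
  | .one, _, _ => False
  | .act a p, b, r => b = a ∧ r = p
  | .alt p q, a, r => Tr p a r ∨ Tr q a r
  | .seq p q, a, r =>
      (∃ p', Tr p a p' ∧ r = .seq p' q) ∨
      (p.term ∧ (∀ b p', ¬ Tr p b p') ∧ Tr q a r)
  | .par Cs p q, a, r =>
      (∃ p', Tr p a p' ∧ ¬ a.inIC Cs ∧ r = .par Cs p' q) ∨
      (∃ q', Tr q a q' ∧ ¬ a.inIC Cs ∧ r = .par Cs p q') ∨
      (a = .tau ∧ ∃ c ∈ Cs, ∃ d p' q',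
        ((Tr p (.recv c d) p' ∧ Tr q (.send c d) q') ∨
         (Tr p (.send c d) p' ∧ Tr q (.recv c d) q')) ∧ r = .par Cs p' q')
  | .star p, a, r => ∃ p', Tr p a p' ∧ r = .seq p' (.star p)
  | .nest p q, a, r =>
      (∃ p', Tr p a p' ∧ r = .seq p' (.seq (.nest p q) p)) ∨ Tr q a r

/-- τ-steps. -/
def TauStep (p q : Proc C D) : Prop := Tr p .tau q

/-- Reflexive-transitive closure of τ-steps. -/
def TauReach : Proc C D → Proc C D → Prop := Relation.ReflTransGen TauStep

/-- `p →(a) q`. -/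
def OptStep (p : Proc C D) (a : Act C D) (q : Proc C D) : Prop :=
  Tr p a q ∨ (a = .tau ∧ p = q)

/-- A symmetric relation `R` is a branching bisimulation. -/
def IsBranchingBisim (R : Proc C D → Proc C D → Prop) : Prop :=
  Symmetric R ∧ ∀ p q, R p q →
    (∀ a p', Tr p a p' →
      ∃ q'' q', TauReach q q'' ∧ OptStep q'' a q' ∧ R p q'' ∧ R p' q') ∧
    (p.term → ∃ q', TauReach q q' ∧ q'.term)

/-- The divergence-preservation condition for a relation `R`. -/
def DivPres (R : Proc C D → Proc C D → Prop) : Prop :=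
  ∀ p q, R p q → ∀ f : ℕ → Proc C D, f 0 = p →
    (∀ i, TauStep (f i) (f (i + 1))) → (∀ i, R (f i) q) →
    ∃ q', Relation.TransGen TauStep q q' ∧ ∃ i, R (f i) q'

/-- Divergence-preserving branching bisimulation. -/
def IsDPBranchingBisim (R : Proc C D → Proc C D → Prop) : Prop :=
  IsBranchingBisim R ∧ DivPres R

/-- The rootedness condition of `R` on the pair `(p, q)`. -/
def RootedOn (R : Proc C D → Proc C D → Prop) (p q : Proc C D) : Prop :=
  (∀ a p', Tr p a p' → ∃ q', Tr q a q' ∧ R p' q') ∧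
  (∀ a q', Tr q a q' → ∃ p', Tr p a p' ∧ R p' q') ∧
  (p.term ↔ q.term)

private lemma div_aux {C D : Type} {R : Proc C D → Proc C D → Prop}
    (hB : IsBranchingBisim R) (hD : DivPres R)
    {x y : Proc C D} (h : R x y) (f : ℕ → Proc C D) (hf0 : f 0 = x)
    (hstep : ∀ i, TauStep (f i) (f (i + 1))) :
    ∃ q', Relation.TransGen TauStep y q' ∧ ∃ i, R (f i) q' := by
  classical
  by_cases hall : ∀ i, R (f i) y
  · exact hD x y h f hf0 hstep hall
  · push_neg at hall
    obtain ⟨k, hk⟩ : ∃ k, Nat.find hall = k + 1 := by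
      refine Nat.exists_eq_succ_of_ne_zero ?_
      intro h0
      exact Nat.find_spec hall (by rw [h0, hf0]; exact h)
    have hfk : R (f k) y := not_not.mp (Nat.find_min hall (by omega))
    obtain ⟨q'', q', hreach, hopt, _, hrel⟩ := (hB.2 _ _ hfk).1 .tau _ (hstep k)
    rcases hopt with hstep' | ⟨_, rfl⟩
    · exact ⟨q', Relation.TransGen.tail' hreach hstep', k + 1, hrel⟩
    · rcases Relation.reflTransGen_iff_eq_or_transGen.mp hreach with rfl | htg
      · exact absurd hrel (hk ▸ Nat.find_spec hall)
      · exact ⟨q'', htg, k + 1, hrel⟩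

/-- Rooted divergence-preserving branching bisimilarity `⇆Δ`. -/
def RDPBBisimilar (p q : Proc C D) : Prop :=
  ∃ R, IsDPBranchingBisim R ∧ R p q ∧ RootedOn R p q


/-- Rooted divergence-preserving branching bisimilarity is a congruence with
respect to alternative composition (choice). -/
theorem rdpbb_congr_alt {C D : Type} (p₁ p₂ q₁ q₂ : Proc C D)
    (h₁ : RDPBBisimilar p₁ q₁) (h₂ : RDPBBisimilar p₂ q₂) :
    RDPBBisimilar (.alt p₁ p₂) (.alt q₁ q₂) := by
  obtain ⟨R₁, ⟨⟨hS₁, hB₁⟩, hD₁⟩, hR₁, hr₁a, hr₁b, hr₁t⟩ := h₁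
  obtain ⟨R₂, ⟨⟨hS₂, hB₂⟩, hD₂⟩, hR₂, hr₂a, hr₂b, hr₂t⟩ := h₂
  refine ⟨fun x y => R₁ x y ∨ R₂ x y ∨ (x = .alt p₁ p₂ ∧ y = .alt q₁ q₂) ∨
      (x = .alt q₁ q₂ ∧ y = .alt p₁ p₂),
    ⟨⟨?_, ?_⟩, ?_⟩, Or.inr (Or.inr (Or.inl ⟨rfl, rfl⟩)), ?_, ?_, ?_⟩
  · -- symmetry
    rintro x y (h | h | ⟨rfl, rfl⟩ | ⟨rfl, rfl⟩)
    · exact Or.inl (hS₁ h)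
    · exact Or.inr (Or.inl (hS₂ h))
    · exact Or.inr (Or.inr (Or.inr ⟨rfl, rfl⟩))
    · exact Or.inr (Or.inr (Or.inl ⟨rfl, rfl⟩))
  · -- branching bisim clauses
    rintro p q (h | h | ⟨rfl, rfl⟩ | ⟨rfl, rfl⟩)
    · refine ⟨fun a p' ht => ?_, fun ht => (hB₁ p q h).2 ht⟩
      obtain ⟨q'', q', h1, h2, h3, h4⟩ := (hB₁ p q h).1 a p' ht
      exact ⟨q'', q', h1, h2, Or.inl h3, Or.inl h4⟩
    · refine ⟨fun a p' ht => ?_, fun ht => (hB₂ p q h).2 ht⟩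
      obtain ⟨q'', q', h1, h2, h3, h4⟩ := (hB₂ p q h).1 a p' ht
      exact ⟨q'', q', h1, h2, Or.inr (Or.inl h3), Or.inr (Or.inl h4)⟩
    · constructor
      · intro a p' ht
        rcases (ht : Tr p₁ a p' ∨ Tr p₂ a p') with ht | ht
        · obtain ⟨q', hq, hrel⟩ := hr₁a a p' ht
          exact ⟨.alt q₁ q₂, q', Relation.ReflTransGen.refl,
            Or.inl (show Tr (Proc.alt q₁ q₂) a q' from Or.inl hq),
            Or.inr (Or.inr (Or.inl ⟨rfl, rfl⟩)), Or.inl hrel⟩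
        · obtain ⟨q', hq, hrel⟩ := hr₂a a p' ht
          exact ⟨.alt q₁ q₂, q', Relation.ReflTransGen.refl,
            Or.inl (show Tr (Proc.alt q₁ q₂) a q' from Or.inr hq),
            Or.inr (Or.inr (Or.inl ⟨rfl, rfl⟩)), Or.inr (Or.inl hrel)⟩
      · intro ht
        rcases (ht : p₁.term ∨ p₂.term) with ht | ht
        · exact ⟨.alt q₁ q₂, Relation.ReflTransGen.refl, Or.inl (hr₁t.mp ht)⟩
        · exact ⟨.alt q₁ q₂, Relation.ReflTransGen.refl, Or.inr (hr₂t.mp ht)⟩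
    · constructor
      · intro a p' ht
        rcases (ht : Tr q₁ a p' ∨ Tr q₂ a p') with ht | ht
        · obtain ⟨q', hq, hrel⟩ := hr₁b a p' ht
          exact ⟨.alt p₁ p₂, q', Relation.ReflTransGen.refl,
            Or.inl (show Tr (Proc.alt p₁ p₂) a q' from Or.inl hq),
            Or.inr (Or.inr (Or.inr ⟨rfl, rfl⟩)), Or.inl (hS₁ hrel)⟩
        · obtain ⟨q', hq, hrel⟩ := hr₂b a p' ht
          exact ⟨.alt p₁ p₂, q', Relation.ReflTransGen.refl,
            Or.inl (show Tr (Proc.alt p₁ p₂) a q' from Or.inr hq),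
            Or.inr (Or.inr (Or.inr ⟨rfl, rfl⟩)), Or.inr (Or.inl (hS₂ hrel))⟩
      · intro ht
        rcases (ht : q₁.term ∨ q₂.term) with ht | ht
        · exact ⟨.alt p₁ p₂, Relation.ReflTransGen.refl, Or.inl (hr₁t.mpr ht)⟩
        · exact ⟨.alt p₁ p₂, Relation.ReflTransGen.refl, Or.inr (hr₂t.mpr ht)⟩
  · -- divergence preservation
    rintro x y (h | h | ⟨rfl, rfl⟩ | ⟨rfl, rfl⟩) f hf0 hstep hall
    · obtain ⟨q', htg, i, hri⟩ := div_aux ⟨hS₁, hB₁⟩ hD₁ h f hf0 hstep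
      exact ⟨q', htg, i, Or.inl hri⟩
    · obtain ⟨q', htg, i, hri⟩ := div_aux ⟨hS₂, hB₂⟩ hD₂ h f hf0 hstep
      exact ⟨q', htg, i, Or.inr (Or.inl hri)⟩
    · have h1 := hstep 0
      rw [hf0] at h1
      rcases (h1 : Tr p₁ .tau (f 1) ∨ Tr p₂ .tau (f 1)) with h1 | h1
      · obtain ⟨q', hq, hrel⟩ := hr₁a _ _ h1
        exact ⟨q', Relation.TransGen.single
          (show Tr (Proc.alt q₁ q₂) .tau q' from Or.inl hq), 1, Or.inl hrel⟩
      · obtain ⟨q', hq, hrel⟩ := hr₂a _ _ h1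
        exact ⟨q', Relation.TransGen.single
          (show Tr (Proc.alt q₁ q₂) .tau q' from Or.inr hq), 1, Or.inr (Or.inl hrel)⟩
    · have h1 := hstep 0
      rw [hf0] at h1
      rcases (h1 : Tr q₁ .tau (f 1) ∨ Tr q₂ .tau (f 1)) with h1 | h1
      · obtain ⟨q', hq, hrel⟩ := hr₁b _ _ h1
        exact ⟨q', Relation.TransGen.single
          (show Tr (Proc.alt p₁ p₂) .tau q' from Or.inl hq), 1, Or.inl (hS₁ hrel)⟩
      · obtain ⟨q', hq, hrel⟩ := hr₂b _ _ h1
        exact ⟨q', Relation.TransGen.single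
          (show Tr (Proc.alt p₁ p₂) .tau q' from Or.inr hq), 1,
          Or.inr (Or.inl (hS₂ hrel))⟩
  · -- rootedness, forward
    rintro a p' (ht | ht)
    · obtain ⟨q', hq, hrel⟩ := hr₁a a p' ht
      exact ⟨q', Or.inl hq, Or.inl hrel⟩
    · obtain ⟨q', hq, hrel⟩ := hr₂a a p' ht
      exact ⟨q', Or.inr hq, Or.inr (Or.inl hrel)⟩
  · -- rootedness, backward
    rintro a q' (ht | ht)
    · obtain ⟨p', hp, hrel⟩ := hr₁b a q' ht
      exact ⟨p', Or.inl hp, Or.inl hrel⟩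
    · obtain ⟨p', hp, hrel⟩ := hr₂b a q' ht
      exact ⟨p', Or.inr hp, Or.inr (Or.inl hrel)⟩
  · exact or_congr hr₁t hr₂t

end TCPRev
end

section
/- Rooted divergence-preserving branching bisimilarity is a congruence with respect to the revised sequential composition operator •: if P1 ⇆Δ Q1 and P2 ⇆Δ Q2, then P1 • P2 ⇆Δ Q1 • Q2. -/
namespace TCPRev

variable {C D : Type}

/-! ### Auxiliary machinery for the congruence proof -/

section Aux

/-- `p` has no outgoing transitions. -/
def NoStep (p : Proc C D) : Prop := ∀ a p', ¬ Tr p a p'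

lemma lift_step {x x' A : Proc C D} {a : Act C D} (h : Tr x a x') :
    Tr (x.seq A) a (x'.seq A) := Or.inl ⟨x', h, rfl⟩

lemma lift_reach {x x' : Proc C D} (A : Proc C D) (h : TauReach x x') :
    TauReach (x.seq A) (x'.seq A) := by
  induction h with
  | refl => exact Relation.ReflTransGen.refl
  | tail _ h2 ih => exact ih.tail (lift_step h2)

lemma lift_transGen {x x' : Proc C D} (A : Proc C D)
    (h : Relation.TransGen TauStep x x') :
    Relation.TransGen TauStep (x.seq A) (x'.seq A) := by
  induction h with
  | single h1 => exact Relation.TransGen.single (lift_step h1)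
  | tail _ h2 ih => exact ih.tail (lift_step h2)

/-- Stuttering: a silent step on the left can be matched keeping the relation. -/
lemma stutter {S : Proc C D → Proc C D → Prop} (hS : IsDPBranchingBisim S)
    {x y x' : Proc C D} (hxy : S x y) (hx : TauStep x x') :
    S x' y ∨ ∃ y', Relation.TransGen TauStep y y' ∧ S x' y' := by
  obtain ⟨y'', y', hre, hop, _h1, h2⟩ := (hS.1.2 x y hxy).1 .tau x' hx
  rcases hop with hstep | ⟨_, rfl⟩
  · exact Or.inr ⟨y', Relation.TransGen.tail' hre hstep, h2⟩
  · rcases hre.cases_head with rfl | ⟨c, hc, hcr⟩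
    · exact Or.inl h2
    · exact Or.inr ⟨y'', Relation.TransGen.head' hc hcr, h2⟩

/-- If `x` is related to `z`, `x` terminates and has no transitions, then any
transition of `z` is silent and keeps the relation to `x`. -/
lemma stuck_forces_tau {S : Proc C D → Proc C D → Prop}
    (hS : IsDPBranchingBisim S) {x : Proc C D} (hns : NoStep x) :
    ∀ z z' a, S x z → Tr z a z' → a = Act.tau ∧ S x z' := by
  intro z z' a hz htr
  obtain ⟨x'', x', hre, hop, _h1, h2⟩ := (hS.1.2 z x (hS.1.1 hz)).1 a z' htr
  rcases hre.cases_head with rfl | ⟨c, hc, _⟩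
  · rcases hop with hstep | ⟨ha, hx'⟩
    · exact absurd hstep (hns _ _)
    · subst ha; subst hx'; exact ⟨rfl, hS.1.1 h2⟩
  · exact absurd hc (hns _ _)

/-- Key auxiliary fact: if `S x y`, `x ↓` and `x ↛`, then `y` can silently
reach some `z` with `z ↓`, `z ↛`, still related to `x`. -/
lemma reach_stuck {S : Proc C D → Proc C D → Prop}
    (hS : IsDPBranchingBisim S) {x y : Proc C D}
    (hxy : S x y) (hterm : x.term) (hns : NoStep x) :
    ∃ z, TauReach y z ∧ S x z ∧ z.term ∧ NoStep z := by
  classical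
  have Ctau := stuck_forces_tau hS hns
  have pres : ∀ {z z'}, S x z → TauReach z z' → S x z' := by
    intro z z' hz hr
    induction hr with
    | refl => exact hz
    | tail _ h2 ih => exact (Ctau _ _ _ ih h2).2
  -- first reach a terminating state
  obtain ⟨w, hw1, hw2⟩ := (hS.1.2 x y hxy).2 hterm
  have hxw : S x w := pres hxy hw1
  -- find a τ-stuck state reachable from w
  have key : ∃ z, TauReach w z ∧ S x z ∧ ∀ z', ¬ TauStep z z' := by
    by_contra h
    push_neg at h
    have hch : ∀ z : {z : Proc C D // TauReach w z ∧ S x z},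
        ∃ z' : {z : Proc C D // TauReach w z ∧ S x z}, TauStep z.1 z'.1 := by
      intro z
      obtain ⟨z', hz'⟩ := h z.1 z.2.1 z.2.2
      exact ⟨⟨z', z.2.1.tail hz', (Ctau _ _ _ z.2.2 hz').2⟩, hz'⟩
    choose F hF using hch
    set g : ℕ → {z : Proc C D // TauReach w z ∧ S x z} :=
      fun n => F^[n] ⟨w, Relation.ReflTransGen.refl, hxw⟩ with hg
    have hgs : ∀ i, TauStep (g i).1 (g (i + 1)).1 := by
      intro i
      have : g (i + 1) = F (g i) := by
        simp only [hg, Function.iterate_succ_apply']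
      rw [this]
      exact hF (g i)
    obtain ⟨q', htg, -⟩ := hS.2 w x (hS.1.1 hxw) (fun n => (g n).1) rfl hgs
      (fun i => hS.1.1 (g i).2.2)
    induction htg with
    | single h1 => exact hns _ _ h1
    | tail _ _ ih => exact ih
  obtain ⟨z, hz1, hz2, hz3⟩ := key
  have hzx : S x z := pres hxw hz1
  have hzterm : z.term := by
    obtain ⟨z₂, hz₂1, hz₂2⟩ := (hS.1.2 x z hzx).2 hterm
    rcases hz₂1.cases_head with rfl | ⟨c, hc, _⟩
    · exact hz₂2
    · exact absurd hc (hz3 _)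
  refine ⟨z, hw1.trans hz1, hzx, hzterm, ?_⟩
  intro a z' htr
  obtain ⟨rfl, -⟩ := Ctau z z' a hzx htr
  exact hz3 z' htr

/-- The candidate bisimulation relation for `seq`. -/
def Big (S T : Proc C D → Proc C D → Prop) (A B : Proc C D) :
    Proc C D → Proc C D → Prop := fun u v =>
  (∃ x y, S x y ∧ u = x.seq A ∧ v = y.seq B) ∨
  (∃ x y, S x y ∧ u = y.seq B ∧ v = x.seq A) ∨ T u v

lemma big_swap {S T : Proc C D → Proc C D → Prop} {A B : Proc C D}
    (hSsym : Symmetric S) {u v : Proc C D} (h : Big S T B A u v) :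
    Big S T A B u v := by
  rcases h with ⟨x, y, h1, h2, h3⟩ | ⟨x, y, h1, h2, h3⟩ | h
  · exact Or.inr (Or.inl ⟨y, x, hSsym h1, h2, h3⟩)
  · exact Or.inl ⟨y, x, hSsym h1, h2, h3⟩
  · exact Or.inr (Or.inr h)

lemma big_symm {S T : Proc C D → Proc C D → Prop} {A B : Proc C D}
    (hTsym : Symmetric T) : Symmetric (Big S T A B) := by
  intro u v h
  rcases h with ⟨x, y, h1, h2, h3⟩ | ⟨x, y, h1, h2, h3⟩ | h
  · exact Or.inr (Or.inl ⟨x, y, h1, h3, h2⟩)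
  · exact Or.inl ⟨x, y, h1, h3, h2⟩
  · exact Or.inr (Or.inr (hTsym h))

/-- One-sided transfer lemma for pairs of the form `(x•A, y•B)`. -/
lemma Lstep {S T : Proc C D → Proc C D → Prop} {A B : Proc C D}
    (hS : IsDPBranchingBisim S)
    (hroot : ∀ a a', Tr A a a' → ∃ b', Tr B a b' ∧ T a' b')
    {x y : Proc C D} (hxy : S x y) :
    ∀ a u', Tr (x.seq A) a u' →
      ∃ v'' v', TauReach (y.seq B) v'' ∧ OptStep v'' a v' ∧
        Big S T A B (x.seq A) v'' ∧ Big S T A B u' v' := by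
  intro a u' hu
  rcases hu with ⟨x', hx', rfl⟩ | ⟨hxt, hxns, hA⟩
  · obtain ⟨y'', y', hre, hop, h1, h2⟩ := (hS.1.2 x y hxy).1 a x' hx'
    refine ⟨y''.seq B, y'.seq B, lift_reach B hre, ?_,
      Or.inl ⟨x, y'', h1, rfl, rfl⟩, Or.inl ⟨x', y', h2, rfl, rfl⟩⟩
    rcases hop with h | ⟨rfl, rfl⟩
    · exact Or.inl (lift_step h)
    · exact Or.inr ⟨rfl, rfl⟩
  · obtain ⟨z, hz1, hz2, hz3, hz4⟩ := reach_stuck hS hxy hxt hxns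
    obtain ⟨b', hb1, hb2⟩ := hroot a u' hA
    exact ⟨z.seq B, b', lift_reach B hz1, Or.inl (Or.inr ⟨hz3, hz4, hb1⟩),
      Or.inl ⟨x, z, hz2, rfl, rfl⟩, Or.inr (Or.inr hb2)⟩

/-- One-sided termination transfer. -/
lemma Lterm {S : Proc C D → Proc C D → Prop} {A B : Proc C D}
    (hS : IsDPBranchingBisim S) (htB : A.term → B.term)
    {x y : Proc C D} (hxy : S x y) (ht : (x.seq A).term) :
    ∃ v', TauReach (y.seq B) v' ∧ v'.term := by
  obtain ⟨ht1, ht2⟩ := ht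
  obtain ⟨y₁, h1, h2⟩ := (hS.1.2 x y hxy).2 ht1
  exact ⟨y₁.seq B, lift_reach B h1, h2, htB ht2⟩

/-- One-sided divergence transfer for pairs of the form `(x•A, y•B)`. -/
lemma Ldiv {S T : Proc C D → Proc C D → Prop} {A B : Proc C D}
    (hS : IsDPBranchingBisim S)
    (hroot : ∀ a a', Tr A a a' → ∃ b', Tr B a b' ∧ T a' b')
    {x y : Proc C D} (hxy : S x y) (f : ℕ → Proc C D)
    (hf0 : f 0 = x.seq A) (hstep : ∀ i, TauStep (f i) (f (i + 1))) :
    ∃ q', Relation.TransGen TauStep (y.seq B) q' ∧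
      ∃ i, Big S T A B (f i) q' := by
  classical
  by_contra hcon
  have inv : ∀ k, ∃ z, f k = z.seq A ∧ S z y := by
    intro k
    induction k with
    | zero => exact ⟨x, hf0, hxy⟩
    | succ k ih =>
      obtain ⟨z, hz1, hz2⟩ := ih
      have hstepk := hstep k
      rw [hz1] at hstepk
      rcases hstepk with ⟨z', hz', heq⟩ | ⟨hzt, hzns, hA⟩
      · rcases stutter hS hz2 hz' with h | ⟨y', hy1, hy2⟩
        · exact ⟨z', heq, h⟩
        · exact absurd ⟨y'.seq B, lift_transGen B hy1,
            k + 1, Or.inl ⟨z', y', hy2, heq, rfl⟩⟩ hcon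
      · obtain ⟨w₂, hw1, hw2, hw3, hw4⟩ := reach_stuck hS hz2 hzt hzns
        obtain ⟨b', hb1, hb2⟩ := hroot .tau (f (k + 1)) hA
        refine absurd ⟨b', ?_, k + 1, Or.inr (Or.inr hb2)⟩ hcon
        exact Relation.TransGen.tail' (lift_reach B hw1)
          (Or.inr ⟨hw3, hw4, hb1⟩)
  set g : ℕ → Proc C D := fun k => (inv k).choose with hgdef
  have hg : ∀ k, f k = (g k).seq A ∧ S (g k) y := fun k => (inv k).choose_spec
  have hg0 : g 0 = x := by
    have := (hg 0).1
    rw [hf0] at this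
    exact ((Proc.seq.injEq _ _ _ _).mp this.symm).1
  have hgs : ∀ i, TauStep (g i) (g (i + 1)) := by
    intro i
    have hstepk := hstep i
    rw [(hg i).1, (hg (i + 1)).1] at hstepk
    rcases hstepk with ⟨z', hz', heq⟩ | ⟨hzt, hzns, hA⟩
    · have h1 : g (i + 1) = z' := ((Proc.seq.injEq _ _ _ _).mp heq).1
      exact h1.symm ▸ hz'
    · obtain ⟨w₂, hw1, hw2, hw3, hw4⟩ := reach_stuck hS (hg i).2 hzt hzns
      obtain ⟨b', hb1, hb2⟩ := hroot .tau ((g (i + 1)).seq A) hA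
      refine absurd ⟨b', ?_, i + 1, Or.inr (Or.inr ((hg (i + 1)).1 ▸ hb2))⟩ hcon
      exact Relation.TransGen.tail' (lift_reach B hw1)
        (Or.inr ⟨hw3, hw4, hb1⟩)
  obtain ⟨y', htg, i, hSi⟩ := hS.2 x y hxy g hg0 hgs (fun i => (hg i).2)
  exact hcon ⟨y'.seq B, lift_transGen B htg, i,
    Or.inl ⟨g i, y', hSi, (hg i).1, rfl⟩⟩

end Aux

/-- Rooted divergence-preserving branching bisimilarity is a congruence with
respect to the revised sequential composition operator `•`. -/
theorem rdpbb_congr_seq {C D : Type} (p₁ p₂ q₁ q₂ : Proc C D)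
    (h₁ : RDPBBisimilar p₁ q₁) (h₂ : RDPBBisimilar p₂ q₂) :
    RDPBBisimilar (.seq p₁ p₂) (.seq q₁ q₂) := by
  classical
  obtain ⟨R₁, hR₁, hm₁, hr₁⟩ := h₁
  obtain ⟨R₂, hR₂, _hm₂, hr₂⟩ := h₂
  have hR₁sym : Symmetric R₁ := hR₁.1.1
  have hR₂sym : Symmetric R₂ := hR₂.1.1
  have root_fwd : ∀ a a', Tr p₂ a a' → ∃ b', Tr q₂ a b' ∧ R₂ a' b' := hr₂.1
  have root_bwd : ∀ a a', Tr q₂ a a' → ∃ b', Tr p₂ a b' ∧ R₂ a' b' := by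
    intro a a' h
    obtain ⟨p', h1, h2⟩ := hr₂.2.1 a a' h
    exact ⟨p', h1, hR₂sym h2⟩
  refine ⟨Big R₁ R₂ p₂ q₂, ⟨⟨big_symm hR₂sym, ?_⟩, ?_⟩,
    Or.inl ⟨p₁, q₁, hm₁, rfl, rfl⟩, ?_, ?_, ?_⟩
  · -- branching bisimulation transfer conditions
    intro u v huv
    rcases huv with ⟨x, y, hS, rfl, rfl⟩ | ⟨x, y, hS, rfl, rfl⟩ | hT
    · exact ⟨Lstep hR₁ root_fwd hS, Lterm hR₁ hr₂.2.2.mp hS⟩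
    · constructor
      · intro a u' hu
        obtain ⟨v'', v', h1, h2, h3, h4⟩ :=
          Lstep (T := R₂) hR₁ root_bwd (hR₁sym hS) a u' hu
        exact ⟨v'', v', h1, h2, big_swap hR₁sym h3, big_swap hR₁sym h4⟩
      · exact Lterm hR₁ hr₂.2.2.mpr (hR₁sym hS)
    · constructor
      · intro a u' hu
        obtain ⟨v'', v', h1, h2, h3, h4⟩ := (hR₂.1.2 u v hT).1 a u' hu
        exact ⟨v'', v', h1, h2, Or.inr (Or.inr h3), Or.inr (Or.inr h4)⟩
      · exact (hR₂.1.2 u v hT).2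
  · -- divergence preservation
    intro u v huv f hf0 hstep hrel
    by_cases hD : ∃ i, (∃ x y, R₁ x y ∧ f i = x.seq p₂ ∧ v = y.seq q₂) ∨
        (∃ x y, R₁ x y ∧ f i = y.seq q₂ ∧ v = x.seq p₂)
    · obtain ⟨i, hi⟩ := hD
      rcases hi with ⟨x, y, hS, hfi, rfl⟩ | ⟨x, y, hS, hfi, rfl⟩
      · obtain ⟨q', htg, j, hbig⟩ := Ldiv (T := R₂) hR₁ root_fwd hS
          (fun j => f (i + j)) hfi (fun j => hstep (i + j))
        exact ⟨q', htg, i + j, hbig⟩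
      · obtain ⟨q', htg, j, hbig⟩ := Ldiv (T := R₂) hR₁ root_bwd (hR₁sym hS)
          (fun j => f (i + j)) hfi (fun j => hstep (i + j))
        exact ⟨q', htg, i + j, big_swap hR₁sym hbig⟩
    · have hT : ∀ i, R₂ (f i) v := by
        intro i
        rcases hrel i with h | h | h
        · exact absurd ⟨i, Or.inl h⟩ hD
        · exact absurd ⟨i, Or.inr h⟩ hD
        · exact h
      obtain ⟨q', htg, i, hi⟩ := hR₂.2 (f 0) v (hT 0) f rfl hstep hT
      exact ⟨q', htg, i, Or.inr (Or.inr hi)⟩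
  · -- rootedness: forward
    intro a u' hu
    rcases hu with ⟨p₁', h1, rfl⟩ | ⟨ht, hns, h2⟩
    · obtain ⟨q₁', hq, hR⟩ := hr₁.1 a p₁' h1
      exact ⟨q₁'.seq q₂, lift_step hq, Or.inl ⟨p₁', q₁', hR, rfl, rfl⟩⟩
    · have hq₁t : q₁.term := hr₁.2.2.mp ht
      have hq₁ns : ∀ b q', ¬ Tr q₁ b q' := by
        intro b q' hq
        obtain ⟨p', hp, _⟩ := hr₁.2.1 b q' hq
        exact hns b p' hp
      obtain ⟨q₂', hq2, hR2⟩ := hr₂.1 a u' h2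
      exact ⟨q₂', Or.inr ⟨hq₁t, hq₁ns, hq2⟩, Or.inr (Or.inr hR2)⟩
  · -- rootedness: backward
    intro a v' hv
    rcases hv with ⟨q₁', h1, rfl⟩ | ⟨ht, hns, h2⟩
    · obtain ⟨p₁', hp, hR⟩ := hr₁.2.1 a q₁' h1
      exact ⟨p₁'.seq p₂, lift_step hp, Or.inl ⟨p₁', q₁', hR, rfl, rfl⟩⟩
    · have hp₁t : p₁.term := hr₁.2.2.mpr ht
      have hp₁ns : ∀ b p', ¬ Tr p₁ b p' := by
        intro b p' hp
        obtain ⟨q', hq, _⟩ := hr₁.1 b p' hp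
        exact hns b q' hq
      obtain ⟨p₂', hp2, hR2⟩ := hr₂.2.1 a v' h2
      exact ⟨p₂', Or.inr ⟨hp₁t, hp₁ns, hp2⟩, Or.inr (Or.inr hR2)⟩
  · -- rootedness: termination
    exact and_congr hr₁.2.2 hr₂.2.2

end TCPRev
end

section
/- Rooted divergence-preserving branching bisimilarity is a congruence with respect to the communication-enforcing parallel composition: if P1 ⇆Δ Q1 and P2 ⇆Δ Q2, then [P1 ∥ P2]_C' ⇆Δ [Q1 ∥ Q2]_C' for any set of channels C'. -/
namespace TCPRev

variable {C D : Type}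

/-!
The witness is the product `ParRel Cs R₁ R₂` of the two witnesses. Transfer, termination and
the root conditions go componentwise; a communication is matched by a communication once both
components have caught up by τ-steps. For divergence preservation, an infinite τ-run of
`[p₁ ∥ p₂]` related throughout to `[q₁ ∥ q₂]` either contains a communication, which
`[q₁ ∥ q₂]` must then match by a genuine τ-step, or it interleaves τ-runs of the two components,
one of which is infinite and is matched by the divergence preservation of its own witness.
-/

section Combinatorics

variable {α : Type*}

theorem eq_of_forall_succ_eq {x : ℕ → α} {m n : ℕ} (hmn : m ≤ n)
    (h : ∀ j, m ≤ j → j < n → x (j + 1) = x j) : x n = x m := by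
  induction n, hmn using Nat.le_induction with
  | base => rfl
  | succ n hmn ih =>
    rw [h n hmn n.lt_succ_self, ih fun j hj hjn => h j hj (hjn.trans n.lt_succ_self)]

theorem exists_chain_of_interleaving {r : α → α → Prop} {A B : ℕ → α}
    (h : ∀ i, (r (A i) (A (i + 1)) ∧ B (i + 1) = B i) ∨ (r (B i) (B (i + 1)) ∧ A (i + 1) = A i)) :
    (∃ g : ℕ → ℕ, ∀ k, r (A (g k)) (A (g (k + 1)))) ∨
      ∃ n, ∀ k, r (B (n + k)) (B (n + k + 1)) := by
  set P : ℕ → Prop := fun i => r (A i) (A (i + 1)) ∧ B (i + 1) = B i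
  by_cases hinf : {i | P i}.Infinite
  · -- between two consecutive `A`-steps, `A` is constant
    refine Or.inl ⟨Nat.nth P, fun k => ?_⟩
    have hnext : A (Nat.nth P (k + 1)) = A (Nat.nth P k + 1) := by
      refine eq_of_forall_succ_eq (Nat.nth_lt_nth hinf |>.mpr k.lt_succ_self) fun j hj hjk => ?_
      exact ((h j).resolve_left fun hPj => absurd (Nat.le_nth_of_lt_nth_succ hjk hPj) (by omega)).2
    exact hnext ▸ (Nat.nth_mem_of_infinite hinf k).1
  · obtain ⟨n, hn⟩ := (Set.not_infinite.mp hinf).bddAbove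
    refine Or.inr ⟨n + 1, fun k => ((h _).resolve_left fun hP => ?_).1⟩
    exact absurd (hn hP) (by omega)

end Combinatorics

inductive Act.Comm (Cs : Set C) : Act C D → Act C D → Prop
  | recv_send {c : C} (d : D) : c ∈ Cs → Act.Comm Cs (.recv c d) (.send c d)
  | send_recv {c : C} (d : D) : c ∈ Cs → Act.Comm Cs (.send c d) (.recv c d)

section Parallel

variable {Cs : Set C}

theorem Act.Comm.left_ne_tau {α β : Act C D} (h : α.Comm Cs β) : α ≠ .tau := by
  cases h <;> nofun

theorem Act.Comm.right_ne_tau {α β : Act C D} (h : α.Comm Cs β) : β ≠ .tau := by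
  cases h <;> nofun

theorem OptStep.tr_of_ne_tau {p q : Proc C D} {α : Act C D} (h : OptStep p α q)
    (hα : α ≠ .tau) : Tr p α q :=
  h.resolve_right fun h => hα h.1

theorem tr_par_iff {p q r : Proc C D} {a : Act C D} :
    Tr (.par Cs p q) a r ↔
      (∃ p', Tr p a p' ∧ ¬ a.inIC Cs ∧ r = .par Cs p' q) ∨
      (∃ q', Tr q a q' ∧ ¬ a.inIC Cs ∧ r = .par Cs p q') ∨
      (a = .tau ∧ ∃ α β p' q', α.Comm Cs β ∧ Tr p α p' ∧ Tr q β q' ∧ r = .par Cs p' q') := by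
  simp only [Tr]
  refine or_congr_right (or_congr_right (and_congr_right fun _ => ⟨?_, ?_⟩))
  · rintro ⟨c, hc, d, p', q', ⟨hp, hq⟩ | ⟨hp, hq⟩, rfl⟩
    · exact ⟨_, _, p', q', .recv_send d hc, hp, hq, rfl⟩
    · exact ⟨_, _, p', q', .send_recv d hc, hp, hq, rfl⟩
  · rintro ⟨_, _, p', q', ⟨d, hc⟩ | ⟨d, hc⟩, hp, hq, rfl⟩
    · exact ⟨_, hc, d, p', q', .inl ⟨hp, hq⟩, rfl⟩
    · exact ⟨_, hc, d, p', q', .inr ⟨hp, hq⟩, rfl⟩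

theorem tr_par_left {p p' q : Proc C D} {a : Act C D} (h : Tr p a p') (ha : ¬ a.inIC Cs) :
    Tr (.par Cs p q) a (.par Cs p' q) :=
  tr_par_iff.mpr (.inl ⟨p', h, ha, rfl⟩)

theorem tr_par_right {p q q' : Proc C D} {a : Act C D} (h : Tr q a q') (ha : ¬ a.inIC Cs) :
    Tr (.par Cs p q) a (.par Cs p q') :=
  tr_par_iff.mpr (.inr (.inl ⟨q', h, ha, rfl⟩))

theorem tauStep_par_comm {p p' q q' : Proc C D} {α β : Act C D} (hαβ : α.Comm Cs β)
    (hp : Tr p α p') (hq : Tr q β q') : TauStep (.par Cs p q) (.par Cs p' q') :=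
  tr_par_iff.mpr (.inr (.inr ⟨rfl, α, β, p', q', hαβ, hp, hq, rfl⟩))

theorem OptStep.par_left {p p' q : Proc C D} {a : Act C D} (h : OptStep p a p')
    (ha : ¬ a.inIC Cs) : OptStep (.par Cs p q) a (.par Cs p' q) :=
  h.imp (tr_par_left · ha) fun ⟨hτ, hp⟩ => ⟨hτ, hp ▸ rfl⟩

theorem OptStep.par_right {p q q' : Proc C D} {a : Act C D} (h : OptStep q a q')
    (ha : ¬ a.inIC Cs) : OptStep (.par Cs p q) a (.par Cs p q') :=
  h.imp (tr_par_right · ha) fun ⟨hτ, hq⟩ => ⟨hτ, hq ▸ rfl⟩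

theorem TauStep.par_cases {p p' q q' : Proc C D} (h : TauStep (.par Cs p q) (.par Cs p' q')) :
    (TauStep p p' ∧ q' = q) ∨ (TauStep q q' ∧ p' = p) ∨
      ∃ α β, α.Comm Cs β ∧ Tr p α p' ∧ Tr q β q' := by
  rcases tr_par_iff.mp h with ⟨_, hp, -, he⟩ | ⟨_, hq, -, he⟩ | ⟨-, α, β, _, _, hαβ, hp, hq, he⟩ <;>
    obtain ⟨-, rfl, rfl⟩ := Proc.par.inj he
  exacts [.inl ⟨hp, rfl⟩, .inr (.inl ⟨hq, rfl⟩), .inr (.inr ⟨α, β, hαβ, hp, hq⟩)]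

theorem tauReach_par_left {p p' : Proc C D} (q : Proc C D) (h : TauReach p p') :
    TauReach (.par Cs p q) (.par Cs p' q) :=
  Relation.ReflTransGen.lift (fun p => Proc.par Cs p q) (fun _ _ h => tr_par_left h id) _ _ h

theorem tauReach_par_right (p : Proc C D) {q q' : Proc C D} (h : TauReach q q') :
    TauReach (.par Cs p q) (.par Cs p q') :=
  Relation.ReflTransGen.lift (fun q => Proc.par Cs p q) (fun _ _ h => tr_par_right h id) _ _ h

theorem transGen_par_left {p p' : Proc C D} (q : Proc C D) (h : Relation.TransGen TauStep p p') :
    Relation.TransGen TauStep (.par Cs p q) (.par Cs p' q) :=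
  Relation.TransGen.lift (fun p => Proc.par Cs p q) (fun _ _ h => tr_par_left h id) _ _ h

theorem transGen_par_right (p : Proc C D) {q q' : Proc C D} (h : Relation.TransGen TauStep q q') :
    Relation.TransGen TauStep (.par Cs p q) (.par Cs p q') :=
  Relation.TransGen.lift (fun q => Proc.par Cs p q) (fun _ _ h => tr_par_right h id) _ _ h

end Parallel

inductive ParRel (Cs : Set C) (R₁ R₂ : Proc C D → Proc C D → Prop) :
    Proc C D → Proc C D → Prop
  | mk {p₁ p₂ q₁ q₂ : Proc C D} :
      R₁ p₁ q₁ → R₂ p₂ q₂ → ParRel Cs R₁ R₂ (.par Cs p₁ p₂) (.par Cs q₁ q₂)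

namespace ParRel

variable {Cs : Set C} {R₁ R₂ : Proc C D → Proc C D → Prop}

theorem flip {p q : Proc C D} (h : ParRel Cs (flip R₁) (flip R₂) p q) : ParRel Cs R₁ R₂ q p := by
  obtain ⟨h₁, h₂⟩ := h
  exact ⟨h₁, h₂⟩

theorem exists_eq_par {p q₁ q₂ : Proc C D} (h : ParRel Cs R₁ R₂ p (.par Cs q₁ q₂)) :
    ∃ p₁ p₂, p = .par Cs p₁ p₂ ∧ R₁ p₁ q₁ ∧ R₂ p₂ q₂ := by
  cases h with
  | mk h₁ h₂ => exact ⟨_, _, rfl, h₁, h₂⟩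

theorem exists_tauStep_of_comm (h₁ : IsBranchingBisim R₁) (h₂ : IsBranchingBisim R₂)
    {p₁ p₂ q₁ q₂ p₁' p₂' : Proc C D} {α β : Act C D} (r₁ : R₁ p₁ q₁) (r₂ : R₂ p₂ q₂)
    (hαβ : α.Comm Cs β) (hp₁ : Tr p₁ α p₁') (hp₂ : Tr p₂ β p₂') :
    ∃ q'' q', TauReach (.par Cs q₁ q₂) q'' ∧ TauStep q'' q' ∧
      ParRel Cs R₁ R₂ (.par Cs p₁ p₂) q'' ∧ ParRel Cs R₁ R₂ (.par Cs p₁' p₂') q' := by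
  obtain ⟨q₁'', q₁', hq₁, hα, r₁'', r₁'⟩ := (h₁.2 _ _ r₁).1 _ _ hp₁
  obtain ⟨q₂'', q₂', hq₂, hβ, r₂'', r₂'⟩ := (h₂.2 _ _ r₂).1 _ _ hp₂
  exact ⟨_, _, (tauReach_par_left q₂ hq₁).trans (tauReach_par_right q₁'' hq₂),
    tauStep_par_comm hαβ (hα.tr_of_ne_tau hαβ.left_ne_tau) (hβ.tr_of_ne_tau hαβ.right_ne_tau),
    ⟨r₁'', r₂''⟩, ⟨r₁', r₂'⟩⟩

theorem isBranchingBisim (h₁ : IsBranchingBisim R₁) (h₂ : IsBranchingBisim R₂) :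
    IsBranchingBisim (ParRel Cs R₁ R₂) := by
  refine ⟨fun _ _ ⟨r₁, r₂⟩ => ⟨h₁.1 r₁, h₂.1 r₂⟩, ?_⟩
  rintro _ _ ⟨r₁, r₂⟩
  refine ⟨fun a r hr => ?_, fun ⟨t₁, t₂⟩ => ?_⟩
  · rcases tr_par_iff.mp hr with ⟨p₁', hp₁, ha, rfl⟩ | ⟨p₂', hp₂, ha, rfl⟩ |
      ⟨rfl, α, β, p₁', p₂', hαβ, hp₁, hp₂, rfl⟩
    · obtain ⟨q₁'', q₁', hq₁, hopt, r₁'', r₁'⟩ := (h₁.2 _ _ r₁).1 _ _ hp₁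
      exact ⟨_, _, tauReach_par_left _ hq₁, hopt.par_left ha, ⟨r₁'', r₂⟩, ⟨r₁', r₂⟩⟩
    · obtain ⟨q₂'', q₂', hq₂, hopt, r₂'', r₂'⟩ := (h₂.2 _ _ r₂).1 _ _ hp₂
      exact ⟨_, _, tauReach_par_right _ hq₂, hopt.par_right ha, ⟨r₁, r₂''⟩, ⟨r₁, r₂'⟩⟩
    · obtain ⟨q'', q', hq, hτ, r'', r'⟩ := exists_tauStep_of_comm h₁ h₂ r₁ r₂ hαβ hp₁ hp₂
      exact ⟨q'', q', hq, .inl hτ, r'', r'⟩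
  · obtain ⟨q₁', hq₁, t₁'⟩ := (h₁.2 _ _ r₁).2 t₁
    obtain ⟨q₂', hq₂, t₂'⟩ := (h₂.2 _ _ r₂).2 t₂
    exact ⟨_, (tauReach_par_left _ hq₁).trans (tauReach_par_right _ hq₂), t₁', t₂'⟩

theorem divPres (h₁ : IsDPBranchingBisim R₁) (h₂ : IsDPBranchingBisim R₂) :
    DivPres (ParRel Cs R₁ R₂) := by
  rintro _ _ ⟨-, -⟩ f - hf hfq
  choose A B hAB hA hB using fun i => (hfq i).exists_eq_par
  have hsteps i := TauStep.par_cases (hAB i ▸ hAB (i + 1) ▸ hf i)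
  by_cases hcomm : ∃ i α β, α.Comm Cs β ∧ Tr (A i) α (A (i + 1)) ∧ Tr (B i) β (B (i + 1))
  · obtain ⟨i, α, β, hαβ, hα, hβ⟩ := hcomm
    obtain ⟨_, q', hq, hτ, -, r'⟩ := exists_tauStep_of_comm h₁.1 h₂.1 (hA i) (hB i) hαβ hα hβ
    exact ⟨q', .tail' hq hτ, i + 1, hAB (i + 1) ▸ r'⟩
  have hinterleave i := (hsteps i).imp_right
    fun h => h.resolve_right fun ⟨α, β, hαβ, hα, hβ⟩ => hcomm ⟨i, α, β, hαβ, hα, hβ⟩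
  rcases exists_chain_of_interleaving hinterleave with ⟨g, hg⟩ | ⟨n, hn⟩
  · obtain ⟨q₁', hq₁, k, r₁⟩ := h₁.2 _ _ (hA (g 0)) (fun k => A (g k)) rfl hg fun k => hA (g k)
    exact ⟨_, transGen_par_left _ hq₁, g k, hAB (g k) ▸ ⟨r₁, hB (g k)⟩⟩
  · obtain ⟨q₂', hq₂, k, r₂⟩ := h₂.2 _ _ (hB n) (fun k => B (n + k)) rfl hn fun k => hB (n + k)
    exact ⟨_, transGen_par_right _ hq₂, n + k, hAB (n + k) ▸ ⟨hA (n + k), r₂⟩⟩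

theorem root_forth {p₁ p₂ q₁ q₂ : Proc C D} (r₁ : R₁ p₁ q₁) (r₂ : R₂ p₂ q₂)
    (h₁ : ∀ a p', Tr p₁ a p' → ∃ q', Tr q₁ a q' ∧ R₁ p' q')
    (h₂ : ∀ a p', Tr p₂ a p' → ∃ q', Tr q₂ a q' ∧ R₂ p' q') (a : Act C D) (p' : Proc C D)
    (hp : Tr (.par Cs p₁ p₂) a p') : ∃ q', Tr (.par Cs q₁ q₂) a q' ∧ ParRel Cs R₁ R₂ p' q' := by
  rcases tr_par_iff.mp hp with ⟨p₁', hp₁, ha, rfl⟩ | ⟨p₂', hp₂, ha, rfl⟩ |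
    ⟨rfl, α, β, p₁', p₂', hαβ, hp₁, hp₂, rfl⟩
  · obtain ⟨q₁', hq₁, r₁'⟩ := h₁ _ _ hp₁
    exact ⟨_, tr_par_left hq₁ ha, r₁', r₂⟩
  · obtain ⟨q₂', hq₂, r₂'⟩ := h₂ _ _ hp₂
    exact ⟨_, tr_par_right hq₂ ha, r₁, r₂'⟩
  · obtain ⟨q₁', hq₁, r₁'⟩ := h₁ _ _ hp₁
    obtain ⟨q₂', hq₂, r₂'⟩ := h₂ _ _ hp₂
    exact ⟨_, tauStep_par_comm hαβ hq₁ hq₂, r₁', r₂'⟩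

theorem rootedOn {p₁ p₂ q₁ q₂ : Proc C D} (r₁ : R₁ p₁ q₁) (r₂ : R₂ p₂ q₂)
    (h₁ : RootedOn R₁ p₁ q₁) (h₂ : RootedOn R₂ p₂ q₂) :
    RootedOn (ParRel Cs R₁ R₂) (.par Cs p₁ p₂) (.par Cs q₁ q₂) :=
  ⟨root_forth r₁ r₂ h₁.1 h₂.1,
    fun a q' hq => (root_forth (R₁ := _root_.flip R₁) (R₂ := _root_.flip R₂) r₁ r₂
      h₁.2.1 h₂.2.1 a q' hq).imp fun _ ⟨hp, r⟩ => ⟨hp, r.flip⟩,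
    and_congr h₁.2.2 h₂.2.2⟩

end ParRel

/-- Rooted divergence-preserving branching bisimilarity is a congruence with
respect to the communication-enforcing parallel composition. -/
theorem rdpbb_congr_par {C D : Type} (Cs : Set C) (p₁ p₂ q₁ q₂ : Proc C D)
    (h₁ : RDPBBisimilar p₁ q₁) (h₂ : RDPBBisimilar p₂ q₂) :
    RDPBBisimilar (.par Cs p₁ p₂) (.par Cs q₁ q₂) := by
  obtain ⟨R₁, hR₁, r₁, root₁⟩ := h₁
  obtain ⟨R₂, hR₂, r₂, root₂⟩ := h₂
  exact ⟨ParRel Cs R₁ R₂, ⟨ParRel.isBranchingBisim hR₁.1 hR₂.1, ParRel.divPres hR₁ hR₂⟩,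
    ⟨r₁, r₂⟩, ParRel.rootedOn r₁ r₂ root₁ root₂⟩

end TCPRev
end

section
/- Rooted divergence-insensitive branching bisimilarity is not a congruence for the revised sequential composition operator •: with P1 = τ.1, P2 = (τ.1)*, and Q = a.1, one has P1 rooted branching bisimilar to P2, but P1 • Q is not rooted branching bisimilar to P2 • Q. -/
namespace TCPRev

variable {C D : Type}

/-- Rootedness condition on initial transitions only (for the
divergence-insensitive rooted branching bisimilarity). -/
def RootedOnTr (R : Proc C D → Proc C D → Prop) (p q : Proc C D) : Prop :=
  (∀ a p', Tr p a p' → ∃ q', Tr q a q' ∧ R p' q') ∧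
  (∀ a q', Tr q a q' → ∃ p', Tr p a p' ∧ R p' q')

/-- Rooted (divergence-insensitive) branching bisimilarity. -/
def RBBisimilar (p q : Proc C D) : Prop :=
  ∃ R, IsBranchingBisim R ∧ R p q ∧ RootedOnTr R p q

section Aux

variable {C D : Type}

/-- `P₁ = τ.1` -/
private abbrev P1 (C D : Type) : Proc C D := Proc.act Act.tau Proc.one

/-- `P₂ = (τ.1)*` -/
private abbrev P2 (C D : Type) : Proc C D := Proc.star (P1 C D)

/-- `S = 1 • (τ.1)*` -/
private abbrev Sp (C D : Type) : Proc C D := Proc.seq Proc.one (P2 C D)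

private lemma tr_P1 {b : Act C D} {r : Proc C D} :
    Tr (P1 C D) b r ↔ b = .tau ∧ r = .one := by simp [Tr]

private lemma tr_P2 {b : Act C D} {r : Proc C D} :
    Tr (P2 C D) b r ↔ b = .tau ∧ r = Sp C D := by
  constructor
  · rintro ⟨p', hp', rfl⟩
    rw [tr_P1] at hp'
    exact ⟨hp'.1, by rw [hp'.2]⟩
  · rintro ⟨rfl, rfl⟩
    exact ⟨.one, ⟨rfl, rfl⟩, rfl⟩

private lemma tr_S {b : Act C D} {r : Proc C D} :
    Tr (Sp C D) b r ↔ b = .tau ∧ r = Sp C D := by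
  constructor
  · rintro (⟨p', hp', rfl⟩ | ⟨_, _, h⟩)
    · exact absurd hp' (by simp [Tr])
    · exact tr_P2.mp h
  · rintro ⟨rfl, rfl⟩
    exact Or.inr ⟨trivial, fun b p' h => by simp [Tr] at h, tr_P2.mpr ⟨rfl, rfl⟩⟩

/-- the relation witnessing `P₁ ⇆ P₂` -/
private def Rw (C D : Type) (x y : Proc C D) : Prop :=
  (x = P1 C D ∧ y = P2 C D) ∨ (x = P2 C D ∧ y = P1 C D) ∨
  (x = .one ∧ y = Sp C D) ∨ (x = Sp C D ∧ y = .one)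

private lemma Rw_bisim : IsBranchingBisim (Rw C D) := by
  constructor
  · rintro x y (⟨rfl, rfl⟩ | ⟨rfl, rfl⟩ | ⟨rfl, rfl⟩ | ⟨rfl, rfl⟩)
    · exact Or.inr (Or.inl ⟨rfl, rfl⟩)
    · exact Or.inl ⟨rfl, rfl⟩
    · exact Or.inr (Or.inr (Or.inr ⟨rfl, rfl⟩))
    · exact Or.inr (Or.inr (Or.inl ⟨rfl, rfl⟩))
  · rintro p q (⟨rfl, rfl⟩ | ⟨rfl, rfl⟩ | ⟨rfl, rfl⟩ | ⟨rfl, rfl⟩)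
    · refine ⟨?_, ?_⟩
      · intro b p' hp'
        obtain ⟨rfl, rfl⟩ := tr_P1.mp hp'
        exact ⟨P2 C D, Sp C D, .refl, Or.inl (tr_P2.mpr ⟨rfl, rfl⟩),
          Or.inl ⟨rfl, rfl⟩, Or.inr (Or.inr (Or.inl ⟨rfl, rfl⟩))⟩
      · intro h; exact absurd h (by simp [Proc.term])
    · refine ⟨?_, ?_⟩
      · intro b p' hp'
        obtain ⟨rfl, rfl⟩ := tr_P2.mp hp'
        exact ⟨P1 C D, .one, .refl, Or.inl (tr_P1.mpr ⟨rfl, rfl⟩),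
          Or.inr (Or.inl ⟨rfl, rfl⟩), Or.inr (Or.inr (Or.inr ⟨rfl, rfl⟩))⟩
      · intro _
        exact ⟨.one, Relation.ReflTransGen.single (tr_P1.mpr ⟨rfl, rfl⟩), trivial⟩
    · refine ⟨?_, ?_⟩
      · intro b p' hp'; exact absurd hp' (by simp [Tr])
      · intro _; exact ⟨Sp C D, .refl, ⟨trivial, trivial⟩⟩
    · refine ⟨?_, ?_⟩
      · intro b p' hp'
        obtain ⟨rfl, rfl⟩ := tr_S.mp hp'
        exact ⟨.one, .one, .refl, Or.inr ⟨rfl, rfl⟩,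
          Or.inr (Or.inr (Or.inr ⟨rfl, rfl⟩)),
          Or.inr (Or.inr (Or.inr ⟨rfl, rfl⟩))⟩
      · intro _; exact ⟨.one, .refl, trivial⟩

private lemma tauReach_SQ {Q x : Proc C D}
    (h : TauReach (Proc.seq (Sp C D) Q) x) : x = Proc.seq (Sp C D) Q := by
  induction h with
  | refl => rfl
  | tail _ h2 ih =>
    subst ih
    rcases h2 with ⟨p', hp', rfl⟩ | ⟨_, hno, _⟩
    · obtain ⟨-, rfl⟩ := tr_S.mp hp'
      rfl
    · exact absurd (tr_S.mpr ⟨rfl, rfl⟩) (hno _ _)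

end Aux

/-- Rooted divergence-insensitive branching bisimilarity is not a congruence
for the revised sequential composition operator `•`: with `P₁ = τ.1`,
`P₂ = (τ.1)*` and `Q = a.1` we have `P₁ ⇆ P₂` but not `P₁ • Q ⇆ P₂ • Q`. -/
theorem rbb_not_congr_seq {C D : Type} (a : Act C D) (ha : a ≠ .tau) :
    RBBisimilar (Proc.act (Act.tau : Act C D) Proc.one)
      (Proc.star (Proc.act (Act.tau : Act C D) Proc.one)) ∧
    ¬ RBBisimilar
        (Proc.seq (Proc.act (Act.tau : Act C D) Proc.one) (Proc.act a Proc.one))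
        (Proc.seq (Proc.star (Proc.act (Act.tau : Act C D) Proc.one))
          (Proc.act a Proc.one)) := by
  constructor
  · refine ⟨Rw C D, Rw_bisim, Or.inl ⟨rfl, rfl⟩, ?_, ?_⟩
    · intro b p' hp'
      obtain ⟨rfl, rfl⟩ := tr_P1.mp hp'
      exact ⟨Sp C D, tr_P2.mpr ⟨rfl, rfl⟩, Or.inr (Or.inr (Or.inl ⟨rfl, rfl⟩))⟩
    · intro b q' hq'
      obtain ⟨rfl, rfl⟩ := tr_P2.mp hq'
      exact ⟨.one, tr_P1.mpr ⟨rfl, rfl⟩, Or.inr (Or.inr (Or.inl ⟨rfl, rfl⟩))⟩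
  · rintro ⟨R, ⟨hsym, hbis⟩, hR, hroot1, hroot2⟩
    set Q : Proc C D := Proc.act a Proc.one with hQ
    -- the initial τ-step of `P₁ • Q`
    have hstep1 : Tr (Proc.seq (P1 C D) Q) .tau (Proc.seq Proc.one Q) :=
      Or.inl ⟨.one, tr_P1.mpr ⟨rfl, rfl⟩, rfl⟩
    obtain ⟨q', hq', hRq⟩ := hroot1 _ _ hstep1
    -- the matching step must go to `S • Q`
    have hq'eq : q' = Proc.seq (Sp C D) Q := by
      rcases hq' with ⟨p', hp', rfl⟩ | ⟨_, hno, _⟩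
      · obtain ⟨_, rfl⟩ := tr_P2.mp hp'
        rfl
      · exact absurd (tr_P2.mpr ⟨rfl, rfl⟩) (hno _ _)
    subst hq'eq
    -- `1 • Q` does an `a`-step
    have hstepa : Tr (Proc.seq Proc.one Q) a Proc.one :=
      Or.inr ⟨trivial, fun b p' h => by simp [Tr] at h, ⟨rfl, rfl⟩⟩
    obtain ⟨q'', qf, hreach, hstep, -, -⟩ := (hbis _ _ hRq).1 _ _ hstepa
    have hq'' := tauReach_SQ hreach
    subst hq''
    rcases hstep with htr | ⟨rfl, -⟩
    · rcases htr with ⟨p', hp', -⟩ | ⟨-, hno, -⟩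
      · exact ha (tr_S.mp hp').1
      · exact absurd (tr_S.mpr ⟨rfl, rfl⟩) (hno _ _)
    · exact ha rfl

end TCPRev
end

section
/- In the revised semantics, the distributivity axiom fails: (a.1 + 1) • b.1 is not strongly bisimilar (indeed not branching bisimilar) to a.1 • b.1 + 1 • b.1. -/
namespace TCPRev

variable {C D : Type}

/-- A symmetric relation `R` is a strong bisimulation. -/
def IsStrongBisim (R : Proc C D → Proc C D → Prop) : Prop :=
  Symmetric R ∧ ∀ p q, R p q →
    (∀ a p', Tr p a p' → ∃ q', Tr q a q' ∧ R p' q') ∧ (p.term → q.term)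

/-- Strong bisimilarity. -/
def StrongBisimilar (p q : Proc C D) : Prop :=
  ∃ R, IsStrongBisim R ∧ R p q

/-- Branching bisimilarity. -/
def BranchingBisimilar (p q : Proc C D) : Prop :=
  ∃ R, IsBranchingBisim R ∧ R p q

theorem tr_act_iff {a c : Act C D} {p r : Proc C D} : Tr (.act a p) c r ↔ c = a ∧ r = p :=
  Iff.rfl

theorem tr_seq_one_iff {q r : Proc C D} {c : Act C D} : Tr (.seq .one q) c r ↔ Tr q c r := by
  simp [Tr, Proc.term]

theorem tr_seq_iff_of_tr {p q r p₀ : Proc C D} {c a : Act C D} (hp : Tr p a p₀) :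
    Tr (.seq p q) c r ↔ ∃ p', Tr p c p' ∧ r = .seq p' q := by
  simp only [Tr]
  exact or_iff_left fun h => h.2.1 a p₀ hp

theorem tr_seq_alt_act_one_one_iff {a c : Act C D} {q r : Proc C D} :
    Tr (.seq (.alt (.act a .one) .one) q) c r ↔ c = a ∧ r = .seq .one q := by
  rw [tr_seq_iff_of_tr (p := .alt (.act a .one) .one) (Or.inl (tr_act_iff.2 ⟨rfl, rfl⟩))]
  simp [Tr]

theorem TauReach.eq_of_forall_not_tauStep {p r : Proc C D} (hp : ∀ r, ¬ TauStep p r)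
    (h : TauReach p r) : r = p := by
  induction h with
  | refl => rfl
  | tail _ hstep ih => exact absurd (ih ▸ hstep) (hp _)

theorem IsStrongBisim.isBranchingBisim {R : Proc C D → Proc C D → Prop} (hR : IsStrongBisim R) :
    IsBranchingBisim R := by
  refine ⟨hR.1, fun p q hpq => ⟨fun a p' hp' => ?_, fun hp => ⟨q, .refl, (hR.2 p q hpq).2 hp⟩⟩⟩
  obtain ⟨q', hq', hpq'⟩ := (hR.2 p q hpq).1 a p' hp'
  exact ⟨q, q', .refl, .inl hq', hpq, hpq'⟩

theorem StrongBisimilar.branchingBisimilar {p q : Proc C D} (h : StrongBisimilar p q) :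
    BranchingBisimilar p q :=
  let ⟨R, hR, hpq⟩ := h
  ⟨R, hR.isBranchingBisim, hpq⟩

/-- `a.1 • b.1 + 1 • b.1` can do `b` and terminate; `(a.1 + 1) • b.1` can only do `a`,
to the state `1 • b.1`, which cannot terminate without performing `b`. -/
theorem not_branchingBisimilar_seq_alt {a b : Act C D} (ha : a ≠ .tau) (hb : b ≠ .tau) :
    ¬ BranchingBisimilar
        (.seq (.alt (.act a .one) .one) (.act b .one))
        (.alt (.seq (.act a .one) (.act b .one)) (.seq .one (.act b .one))) := by
  rintro ⟨R, hR, hPQ⟩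
  have hQ_b : Tr (.alt (.seq (.act a .one) (.act b .one)) (.seq .one (.act b .one))) b .one :=
    .inr (tr_seq_one_iff.2 (tr_act_iff.2 ⟨rfl, rfl⟩))
  obtain ⟨P'', P', hreach, hopt, -, hR₁⟩ := (hR.2 _ _ (hR.1 hPQ)).1 b .one hQ_b
  obtain rfl := hreach.eq_of_forall_not_tauStep fun r h =>
    ha (tr_seq_alt_act_one_one_iff.1 h).1.symm
  rcases hopt with hP_b | ⟨hb_tau, -⟩
  · obtain ⟨-, rfl⟩ := tr_seq_alt_act_one_one_iff.1 hP_b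
    obtain ⟨r, hr, hr_term⟩ := (hR.2 _ _ hR₁).2 trivial
    obtain rfl := hr.eq_of_forall_not_tauStep fun r h =>
      hb (tr_act_iff.1 (tr_seq_one_iff.1 h)).1.symm
    exact hr_term.2
  · exact hb hb_tau

/-- In the revised semantics the distributivity axiom fails:
`(a.1 + 1) • b.1` is not strongly bisimilar (indeed not branching bisimilar)
to `a.1 • b.1 + 1 • b.1`. -/
theorem distributivity_fails {C D : Type} (a b : Act C D)
    (ha : a ≠ .tau) (hb : b ≠ .tau) :
    ¬ StrongBisimilar
        (Proc.seq (Proc.alt (Proc.act a Proc.one) Proc.one)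
          (Proc.act b Proc.one))
        (Proc.alt (Proc.seq (Proc.act a Proc.one) (Proc.act b Proc.one))
          (Proc.seq Proc.one (Proc.act b Proc.one))) ∧
    ¬ BranchingBisimilar
        (Proc.seq (Proc.alt (Proc.act a Proc.one) Proc.one)
          (Proc.act b Proc.one))
        (Proc.alt (Proc.seq (Proc.act a Proc.one) (Proc.act b Proc.one))
          (Proc.seq Proc.one (Proc.act b Proc.one))) :=
  ⟨fun h => not_branchingBisimilar_seq_alt ha hb h.branchingBisimilar,
    not_branchingBisimilar_seq_alt ha hb⟩

end TCPRev
end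

section
/- With the revised sequential composition semantics, in the specification X = a.(X•Y) + b.1, Y = c.1 + 1, every state Y^n (n ≥ 1) has exactly one outgoing transition, namely Y^n →c Y^{n-1}; hence the transition system generated by X is boundedly branching (branching degree at most 2). -/
namespace Stmt12

/-- Process expressions over an action alphabet `A`, with a name `X` for the
recursive specification `X = a.(X•Y) + b.1`, `Y = c.1 + 1`. -/
inductive Pr (A : Type) : Type
  | zero : Pr A
  | one : Pr A
  | act : A → Pr A → Pr A
  | seq : Pr A → Pr A → Pr A
  | alt : Pr A → Pr A → Pr A
  | X : Pr A

variable {A : Type}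

/-- The process `Y = c.1 + 1`. -/
def Yp (lc : A) : Pr A := Pr.alt (Pr.act lc Pr.one) Pr.one

/-- Termination predicate (`X = a.(X•Y) + b.1` does not terminate). -/
def Pr.term : Pr A → Prop
  | .zero => False
  | .one => True
  | .act _ _ => False
  | .seq p q => p.term ∧ q.term
  | .alt p q => p.term ∨ q.term
  | .X => False

/-- The transition relation under the *revised* semantics of sequential
composition: `P₁ • P₂` may only move in its second component if `P₁ ↓` and
`P₁` has no outgoing transitions.  The name `X` unfolds to `a.(X•Y) + b.1`. -/
def Tr (la lb lc : A) : Pr A → A → Pr A → Prop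
  | .zero, _, _ => False
  | .one, _, _ => False
  | .act a p, b, r => b = a ∧ r = p
  | .alt p q, a, r => Tr la lb lc p a r ∨ Tr la lb lc q a r
  | .seq p q, a, r =>
      (∃ p', Tr la lb lc p a p' ∧ r = .seq p' q) ∨
      (p.term ∧ (∀ b p', ¬ Tr la lb lc p b p') ∧ Tr la lb lc q a r)
  | .X, a, r => (a = la ∧ r = .seq .X (Yp lc)) ∨ (a = lb ∧ r = .one)

/-- `Y^n`: `Y^0 = 1` and `Y^{n+1} = Y • Y^n`. -/
def Ypow (lc : A) : ℕ → Pr A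
  | 0 => Pr.one
  | n + 1 => Pr.seq (Yp lc) (Ypow lc n)

/-- Strong bisimulations. -/
def IsStrongBisim (la lb lc : A) (R : Pr A → Pr A → Prop) : Prop :=
  Symmetric R ∧ ∀ p q, R p q →
    (∀ a p', Tr la lb lc p a p' → ∃ q', Tr la lb lc q a q' ∧ R p' q') ∧
    (p.term → q.term)

/-- Strong bisimilarity. -/
def StrongBisimilar (la lb lc : A) (p q : Pr A) : Prop :=
  ∃ R, IsStrongBisim la lb lc R ∧ R p q

/-- Reachability in the transition system. -/
def Reach (la lb lc : A) : Pr A → Pr A → Prop :=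
  Relation.ReflTransGen (fun p q => ∃ a, Tr la lb lc p a q)

/-- `X • Y^n` left-nested: `Xs 0 = X`, `Xs (n+1) = (Xs n) • Y`. -/
def Xs (lc : A) : ℕ → Pr A
  | 0 => .X
  | n + 1 => .seq (Xs lc n) (Yp lc)

/-- `1 • Y • ... • Y` left-nested. -/
def Ls (lc : A) : ℕ → Pr A
  | 0 => .one
  | n + 1 => .seq (Ls lc n) (Yp lc)

lemma tr_one {A : Type} (la lb lc a : A) (r : Pr A) : ¬ Tr la lb lc Pr.one a r := fun h => h

lemma tr_Yp {A : Type} (la lb lc a : A) (r : Pr A) :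
    Tr la lb lc (Yp lc) a r ↔ (a = lc ∧ r = Pr.one) := by
  simp [Yp, Tr]

lemma Yp_has {A : Type} (la lb lc : A) : Tr la lb lc (Yp lc) lc Pr.one := by simp [Yp, Tr]

lemma Xs_not_term {A : Type} (lc : A) : ∀ n, ¬ (Xs lc n).term := by
  intro n
  induction n with
  | zero => exact fun h => h
  | succ n ih => exact fun h => ih h.1

lemma tr_Xs {A : Type} (la lb lc : A) (n : ℕ) (a : A) (r : Pr A) :
    Tr la lb lc (Xs lc n) a r ↔
      (a = la ∧ r = Xs lc (n + 1)) ∨ (a = lb ∧ r = Ls lc n) := by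
  induction n generalizing a r with
  | zero => exact Iff.rfl
  | succ n ih =>
    constructor
    · rintro (⟨p', hp, rfl⟩ | ⟨ht, -, -⟩)
      · rcases (ih a p').1 hp with ⟨rfl, rfl⟩ | ⟨rfl, rfl⟩
        · exact Or.inl ⟨rfl, rfl⟩
        · exact Or.inr ⟨rfl, rfl⟩
      · exact absurd ht (Xs_not_term lc n)
    · rintro (⟨rfl, rfl⟩ | ⟨rfl, rfl⟩)
      · exact Or.inl ⟨Xs lc (n + 1), (ih _ _).2 (Or.inl ⟨rfl, rfl⟩), rfl⟩
      · exact Or.inl ⟨Ls lc n, (ih _ _).2 (Or.inr ⟨rfl, rfl⟩), rfl⟩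

lemma tr_Ls {A : Type} (la lb lc : A) (n : ℕ) (a : A) (r : Pr A) :
    Tr la lb lc (Ls lc (n + 1)) a r ↔ (a = lc ∧ r = Ls lc n) := by
  induction n generalizing a r with
  | zero =>
    constructor
    · rintro (⟨p', hp, -⟩ | ⟨-, -, h⟩)
      · exact absurd hp (tr_one la lb lc a p')
      · exact (tr_Yp la lb lc a r).1 h
    · rintro ⟨rfl, rfl⟩
      exact Or.inr ⟨trivial, fun b p' h => h, Yp_has _ _ _⟩
  | succ n ih =>
    constructor
    · rintro (⟨p', hp, rfl⟩ | ⟨-, hno, -⟩)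
      · obtain ⟨rfl, rfl⟩ := (ih a p').1 hp
        exact ⟨rfl, rfl⟩
      · exact absurd ((ih _ _).2 ⟨rfl, rfl⟩) (hno _ _)
    · rintro ⟨rfl, rfl⟩
      exact Or.inl ⟨Ls _ n, (ih _ _).2 ⟨rfl, rfl⟩, rfl⟩

/-- States reachable from `X`. -/
def Good {A : Type} (lc : A) (p : Pr A) : Prop := (∃ n, p = Xs lc n) ∨ (∃ n, p = Ls lc n)

lemma good_step {A : Type} (la lb lc : A) {p q : Pr A} (hp : Good lc p) (h : ∃ a, Tr la lb lc p a q) :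
    Good lc q := by
  obtain ⟨a, h⟩ := h
  rcases hp with ⟨n, rfl⟩ | ⟨n, rfl⟩
  · rcases (tr_Xs la lb lc n a q).1 h with ⟨-, rfl⟩ | ⟨-, rfl⟩
    · exact Or.inl ⟨n + 1, rfl⟩
    · exact Or.inr ⟨n, rfl⟩
  · cases n with
    | zero => exact absurd h (tr_one la lb lc a q)
    | succ m =>
      obtain ⟨-, rfl⟩ := (tr_Ls la lb lc m a q).1 h
      exact Or.inr ⟨m, rfl⟩

/-- With the revised sequential composition, in the specification
`X = a.(X•Y) + b.1`, `Y = c.1 + 1`, every state `Y^n` (`n ≥ 1`) has exactly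
one outgoing transition, a `c`-transition to (a process strongly bisimilar to)
`Y^{n-1}`; hence the transition system generated by `X` is boundedly branching,
with branching degree at most 2. -/

theorem revised_bounded_branching {A : Type} (la lb lc : A) :
    (∀ n, 1 ≤ n →
      (∀ a q, Tr la lb lc (Ypow lc n) a q ↔
        (a = lc ∧ q = Pr.seq Pr.one (Ypow lc (n - 1)))) ∧
      StrongBisimilar la lb lc (Pr.seq Pr.one (Ypow lc (n - 1)))
        (Ypow lc (n - 1))) ∧
    (∀ p : Pr A, Reach la lb lc Pr.X p →
      {x : A × Pr A | Tr la lb lc p x.1 x.2}.Finite ∧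
      {x : A × Pr A | Tr la lb lc p x.1 x.2}.ncard ≤ 2) := by
  constructor
  · intro n hn
    obtain ⟨m, rfl⟩ : ∃ m, n = m + 1 := ⟨n - 1, (Nat.succ_pred_eq_of_pos hn).symm⟩
    simp only [Nat.add_sub_cancel]
    constructor
    · intro a q
      constructor
      · rintro (⟨p', hp, rfl⟩ | ⟨-, hno, -⟩)
        · obtain ⟨rfl, rfl⟩ := (tr_Yp la lb lc a p').1 hp
          exact ⟨rfl, rfl⟩
        · exact absurd (Yp_has la lb lc) (hno lc Pr.one)
      · rintro ⟨rfl, rfl⟩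
        exact Or.inl ⟨Pr.one, (tr_Yp _ _ _ _ _).2 ⟨rfl, rfl⟩, rfl⟩
    · refine ⟨fun p q => p = q ∨ (Pr.seq Pr.one q = p) ∨ (Pr.seq Pr.one p = q),
        ⟨?_, ?_⟩, Or.inr (Or.inl rfl)⟩
      · rintro p q (rfl | h | h)
        · exact Or.inl rfl
        · exact Or.inr (Or.inr h)
        · exact Or.inr (Or.inl h)
      · rintro p q (rfl | rfl | rfl)
        · exact ⟨fun a p' h => ⟨p', h, Or.inl rfl⟩, id⟩
        · refine ⟨fun a p' h => ?_, fun h => h.2⟩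
          rcases h with ⟨r', hr, -⟩ | ⟨-, -, h⟩
          · exact absurd hr (tr_one la lb lc a r')
          · exact ⟨p', h, Or.inl rfl⟩
        · exact ⟨fun a p' h =>
            ⟨p', Or.inr ⟨trivial, fun b r hh => hh, h⟩, Or.inl rfl⟩,
            fun h => ⟨trivial, h⟩⟩
  · intro p hp
    have hgood : Good lc p := by
      induction hp with
      | refl => exact Or.inl ⟨0, rfl⟩
      | tail _ step ih => exact good_step la lb lc ih step
    rcases hgood with ⟨n, rfl⟩ | ⟨n, rfl⟩
    · have hs : {x : A × Pr A | Tr la lb lc (Xs lc n) x.1 x.2} =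
          {(la, Xs lc (n + 1)), (lb, Ls lc n)} := by
        ext ⟨a, r⟩
        simp [tr_Xs, Prod.ext_iff]
      rw [hs]
      refine ⟨(Set.finite_singleton _).insert _, ?_⟩
      exact (Set.ncard_insert_le _ _).trans (by simp)
    · cases n with
      | zero =>
        have hs : {x : A × Pr A | Tr la lb lc (Ls lc 0) x.1 x.2} = ∅ := by
          ext ⟨a, r⟩
          exact iff_of_false (tr_one la lb lc a r) (fun h => h)
        rw [hs]
        simp
      | succ m =>
        have hs : {x : A × Pr A | Tr la lb lc (Ls lc (m + 1)) x.1 x.2} =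
            {(lc, Ls lc m)} := by
          ext ⟨a, r⟩
          simp [tr_Ls, Prod.ext_iff]
        rw [hs]
        simp

end Stmt12
end

section
/- For every context-free process given by a finite guarded recursive specification in Greibach normal form over TSP• (the sequential theory with the revised sequential composition), there exists a pushdown automaton M such that the transition system of the specification's initial name is strongly bisimilar to the pushdown process T(M). -/
namespace Stmt13

/-- A finite guarded recursive specification in Greibach normal form over
TSP• : every name `X` is defined by `X = Σ_i α_i.ξ_i (+ 1)`, where each `ξ_i`
is a sequence of names and the optional `1`-summand is recorded by `tflag`. -/
structure GNF (A : Type) : Type 1 where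
  V : Type
  finV : Finite V
  /-- the summands `α_i.ξ_i` of each name -/
  summands : V → List (A × List V)
  /-- whether the defining equation has the optional `+1` summand -/
  tflag : V → Prop

variable {A : Type}

/-- The transition relation on sequences of names under the *revised*
sequential composition: the head name moves by expanding one of its summands;
the tail may only move if the head terminates and has no transitions
(no summands). -/
def TrSeq (G : GNF A) : List G.V → A → List G.V → Prop
  | [], _, _ => False
  | X :: ξ, a, r =>
      (∃ s ∈ G.summands X, s.1 = a ∧ r = s.2 ++ ξ) ∨
      (G.tflag X ∧ G.summands X = [] ∧ TrSeq G ξ a r)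

/-- A sequence of names terminates iff all its names do. -/
def DnSeq (G : GNF A) (ξ : List G.V) : Prop := ∀ X ∈ ξ, G.tflag X

/-- A pushdown automaton (with the given input alphabet `A`). -/
structure PDA (A : Type) : Type 1 where
  /-- states -/
  S : Type
  finS : Finite S
  /-- stack symbols -/
  D : Type
  finD : Finite D
  /-- the finite transition relation -/
  trans : Set (S × A × D × List D × S)
  finTrans : trans.Finite
  /-- initial state -/
  start : S
  /-- initial stack symbol -/
  Z : D
  /-- accepting states -/
  acc : Set S

/-- Configuration transitions of a PDA. -/
def PDA.cstep (M : PDA A) (c : M.S × List M.D) (a : A)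
    (c' : M.S × List M.D) : Prop :=
  ∃ d δ δ', c.2 = d :: δ ∧ c'.2 = δ' ++ δ ∧ (c.1, a, d, δ', c'.1) ∈ M.trans

/-- Accepting configurations of a PDA. -/
def PDA.cacc (M : PDA A) (c : M.S × List M.D) : Prop := c.1 ∈ M.acc

/-- A strong bisimulation between two transition systems. -/
def IsStrongBisim2 {S₁ S₂ : Type*} (tr₁ : S₁ → A → S₁ → Prop) (d₁ : S₁ → Prop)
    (tr₂ : S₂ → A → S₂ → Prop) (d₂ : S₂ → Prop) (R : S₁ → S₂ → Prop) : Prop :=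
  ∀ s t, R s t →
    (∀ a s', tr₁ s a s' → ∃ t', tr₂ t a t' ∧ R s' t') ∧
    (∀ a t', tr₂ t a t' → ∃ s', tr₁ s a s' ∧ R s' t') ∧
    (d₁ s ↔ d₂ t)

/-!
Names that terminate and have no summands (inert names) are exactly those that the revised
sequential composition skips, so a sequence of names behaves like the sequence with its inert
names deleted. The automaton keeps that filtered sequence on its stack, each name tagged with
whether all names below it terminate (a single bit in place of the set of names below it), and
its state records whether the whole stack terminates.
Popping the head `X` and pushing a filtered summand `ξ` of `X` with the tag of `X` then simulates
one transition, and acceptance is read off the state.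
-/

def Inert (G : GNF A) (X : G.V) : Prop := G.tflag X ∧ G.summands X = []

open Classical in
noncomputable def dropInert (G : GNF A) (ξ : List G.V) : List G.V :=
  ξ.filter fun X => ¬ Inert G X

section Sequences

variable {G : GNF A}

theorem dnSeq_append {ξ η : List G.V} : DnSeq G (ξ ++ η) ↔ DnSeq G ξ ∧ DnSeq G η := by
  simp only [DnSeq, List.mem_append, or_imp, forall_and]

theorem dnSeq_of_forall_inert {ι : List G.V} (hι : ∀ X ∈ ι, Inert G X) : DnSeq G ι :=
  fun X hX => (hι X hX).1

theorem dnSeq_dropInert {ξ : List G.V} : DnSeq G (dropInert G ξ) ↔ DnSeq G ξ := by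
  refine ⟨fun h X hX => ?_, fun h X hX => h X (List.mem_of_mem_filter hX)⟩
  by_cases hX' : Inert G X
  · exact hX'.1
  · exact h X (List.mem_filter.2 ⟨hX, by simpa using hX'⟩)

theorem dropInert_cons_of_inert {X : G.V} (hX : Inert G X) (ξ : List G.V) :
    dropInert G (X :: ξ) = dropInert G ξ := by
  simp [dropInert, hX]

theorem dropInert_cons_of_not_inert {X : G.V} (hX : ¬ Inert G X) (ξ : List G.V) :
    dropInert G (X :: ξ) = X :: dropInert G ξ := by
  simp [dropInert, hX]

theorem not_inert_of_mem_summands {X : G.V} {s : A × List G.V} (hs : s ∈ G.summands X) :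
    ¬ Inert G X :=
  fun hX => by simp [hX.2] at hs

theorem TrSeq.exists_dropInert_eq_cons {ξ r : List G.V} {a : A} (h : TrSeq G ξ a r) :
    ∃ X ρ s, dropInert G ξ = X :: ρ ∧ (a, s) ∈ G.summands X ∧
      dropInert G r = dropInert G s ++ ρ := by
  induction ξ with
  | nil => exact h.elim
  | cons Y ξ ih =>
    rcases h with ⟨s, hs, rfl, rfl⟩ | ⟨hterm, hnil, htail⟩
    · refine ⟨Y, dropInert G ξ, s.2, dropInert_cons_of_not_inert
        (not_inert_of_mem_summands hs) ξ, hs, List.filter_append _ _⟩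
    · rw [dropInert_cons_of_inert ⟨hterm, hnil⟩]
      exact ih htail

theorem exists_trSeq_of_dropInert_eq_cons {ξ ρ s : List G.V} {X : G.V} {a : A}
    (hξ : dropInert G ξ = X :: ρ) (hs : (a, s) ∈ G.summands X) :
    ∃ r, TrSeq G ξ a r ∧ dropInert G r = dropInert G s ++ ρ := by
  induction ξ with
  | nil => simp [dropInert] at hξ
  | cons Y ξ ih =>
    by_cases hY : Inert G Y
    · rw [dropInert_cons_of_inert hY] at hξ
      obtain ⟨r, hr, hdrop⟩ := ih hξ
      exact ⟨r, Or.inr ⟨hY.1, hY.2, hr⟩, hdrop⟩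
    · rw [dropInert_cons_of_not_inert hY, List.cons.injEq] at hξ
      obtain ⟨rfl, rfl⟩ := hξ
      exact ⟨s ++ ξ, Or.inl ⟨(a, s), hs, rfl, rfl⟩, List.filter_append _ _⟩

end Sequences

/-- The stack word of a sequence of names: each name is tagged with whether all names below it
terminate, the names below the sequence itself terminating iff `b` holds. -/
def stackOf (G : GNF A) (b : Prop) : List G.V → List (G.V × Prop)
  | [] => []
  | X :: ζ => (X, DnSeq G ζ ∧ b) :: stackOf G b ζ

theorem stackOf_append (G : GNF A) (b : Prop) (ξ η : List G.V) :
    stackOf G b (ξ ++ η) = stackOf G (DnSeq G η ∧ b) ξ ++ stackOf G b η := by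
  induction ξ with
  | nil => rfl
  | cons X ξ ih => simp only [List.cons_append, stackOf, ih, dnSeq_append, and_assoc]

def pdaTrans (G : GNF A) : Set (Prop × A × (G.V × Prop) × List (G.V × Prop) × Prop) :=
  ⋃ (q : Prop) (X : G.V) (b : Prop),
    (fun s : A × List G.V =>
      (q, s.1, (X, b), stackOf G b (dropInert G s.2), DnSeq G (dropInert G s.2) ∧ b)) ''
      {s | s ∈ G.summands X}

theorem mem_pdaTrans {G : GNF A} {q q' : Prop} {a : A} {X : G.V} {b : Prop}
    {δ : List (G.V × Prop)} :
    (q, a, (X, b), δ, q') ∈ pdaTrans G ↔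
      ∃ s, (a, s) ∈ G.summands X ∧ δ = stackOf G b (dropInert G s) ∧
        q' = (DnSeq G (dropInert G s) ∧ b) := by
  simp only [pdaTrans, Set.mem_iUnion, Set.mem_image, Set.mem_ofPred_eq, Prod.mk.injEq]
  constructor
  · rintro ⟨_, _, _, ⟨a, s⟩, hs, rfl, rfl, ⟨rfl, rfl⟩, rfl, rfl⟩
    exact ⟨s, hs, rfl, rfl⟩
  · rintro ⟨s, hs, rfl, rfl⟩
    exact ⟨q, X, b, (a, s), hs, rfl, rfl, ⟨rfl, rfl⟩, rfl, rfl⟩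

theorem pdaTrans_finite (G : GNF A) : (pdaTrans G).Finite := by
  have := G.finV
  exact Set.finite_iUnion fun _ => Set.finite_iUnion fun _ => Set.finite_iUnion fun _ =>
    (List.finite_toSet _).image _

noncomputable def toPDA (G : GNF A) (X₀ : G.V) : PDA A where
  S := Prop
  finS := inferInstance
  D := G.V × Prop
  finD := by have := G.finV; infer_instance
  trans := pdaTrans G
  finTrans := pdaTrans_finite G
  start := G.tflag X₀
  Z := (X₀, True)
  acc := {q | q}

def conf (G : GNF A) (b : Prop) (ζ : List G.V) : Prop × List (G.V × Prop) :=
  (DnSeq G ζ ∧ b, stackOf G b ζ)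

theorem cstep_conf_iff {G : GNF A} {X₀ : G.V} {b : Prop} {ζ : List G.V} {a : A}
    {c : Prop × List (G.V × Prop)} :
    (toPDA G X₀).cstep (conf G b ζ) a c ↔
      ∃ X ρ s, ζ = X :: ρ ∧ (a, s) ∈ G.summands X ∧ c = conf G b (dropInert G s ++ ρ) := by
  rcases c with ⟨q', σ⟩
  cases ζ with
  | nil => simp [PDA.cstep, conf, stackOf]
  | cons X ρ =>
    have hconf (s : List G.V) : conf G b (dropInert G s ++ ρ) =
        (DnSeq G (dropInert G s) ∧ DnSeq G ρ ∧ b,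
          stackOf G (DnSeq G ρ ∧ b) (dropInert G s) ++ stackOf G b ρ) := by
      simp only [conf, stackOf_append, dnSeq_append, and_assoc]
    constructor
    · rintro ⟨d, δ, δ', hσ, hσ', htr⟩
      obtain ⟨rfl, rfl⟩ := List.cons.inj hσ
      obtain ⟨s, hs, rfl, hq⟩ := mem_pdaTrans.1 htr
      exact ⟨X, ρ, s, rfl, hs, by rw [hconf]; exact Prod.ext hq hσ'⟩
    · rintro ⟨_, _, s, hζ, hs, hc⟩
      obtain ⟨rfl, rfl⟩ := List.cons.inj hζ
      rw [hc, hconf]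
      exact ⟨_, _, _, rfl, rfl, mem_pdaTrans.2 ⟨s, hs, rfl, rfl⟩⟩

/-- The inert tail `ι` is needed only for the initial stack `[X₀]` when `X₀` is inert. -/
def Sim (G : GNF A) (ξ : List G.V) (c : Prop × List (G.V × Prop)) : Prop :=
  ∃ ι : List G.V, (∀ X ∈ ι, Inert G X) ∧ c = conf G True (dropInert G ξ ++ ι)

theorem isStrongBisim2_sim (G : GNF A) (X₀ : G.V) :
    IsStrongBisim2 (TrSeq G) (DnSeq G) (toPDA G X₀).cstep (toPDA G X₀).cacc (Sim G) := by
  rintro ξ c ⟨ι, hι, rfl⟩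
  refine ⟨fun a r htr => ?_, fun a c' hstep => ?_, ?_⟩
  · obtain ⟨X, ρ, s, hξ, hs, hr⟩ := htr.exists_dropInert_eq_cons
    refine ⟨conf G True (dropInert G r ++ ι),
      cstep_conf_iff.2 ⟨X, ρ ++ ι, s, ?_, hs, ?_⟩, ι, hι, rfl⟩
    · rw [hξ, List.cons_append]
    · rw [hr, List.append_assoc]
  · obtain ⟨X, ρ', s, hζ, hs, rfl⟩ := cstep_conf_iff.1 hstep
    rcases List.append_eq_cons_iff.1 hζ with ⟨-, rfl⟩ | ⟨ρ, hξ, rfl⟩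
    · exact absurd (hι X List.mem_cons_self) (not_inert_of_mem_summands hs)
    · obtain ⟨r, htr, hr⟩ := exists_trSeq_of_dropInert_eq_cons hξ hs
      exact ⟨r, htr, ι, hι, by rw [hr, List.append_assoc]⟩
  · simp only [PDA.cacc, toPDA, conf, and_true, dnSeq_append, dnSeq_dropInert,
      dnSeq_of_forall_inert hι]
    exact Iff.rfl

/-- For every context-free process, given by a finite guarded recursive
specification in Greibach normal form over TSP• with initial name `X₀`, there
is a pushdown automaton `M` whose pushdown process is strongly bisimilar to
the transition system of `X₀`. -/
theorem cfp_to_pda {A : Type} (G : GNF A) (X₀ : G.V) :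
    ∃ M : PDA A, ∃ R : List G.V → (M.S × List M.D) → Prop,
      IsStrongBisim2 (TrSeq G) (DnSeq G) M.cstep M.cacc R ∧
      R [X₀] (M.start, [M.Z]) := by
  refine ⟨toPDA G X₀, Sim G, isStrongBisim2_sim G X₀, ?_⟩
  have hstart : ((toPDA G X₀).start, [(toPDA G X₀).Z]) = conf G True [X₀] := by
    simp [toPDA, conf, stackOf, DnSeq]
  by_cases hX₀ : Inert G X₀
  · exact ⟨[X₀], by simpa using hX₀, by rw [hstart, dropInert_cons_of_inert hX₀]; rfl⟩
  · exact ⟨[], by simp, by rw [hstart, dropInert_cons_of_not_inert hX₀]; rfl⟩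

end Stmt13
end

section
/- In the bisimulation between a Greibach-normal-form specification and its constructed pushdown automaton, the stack-encoding function is compatible with expansion: for any sequence ξ = X_j ξ' of names and any summand α_{ij}.ξ_{ij} of X_j, the stack δ(s_{suffset(ξ,0)}, top, ξ_{ij}) · stack(ξ') equals stack(ξ_{ij} ξ'), where 'top' is the first symbol of stack(ξ) (either X_j† or X_j), and the new control state index D(s_{suffset(ξ,0)}, top, ξ_{ij}) equals suffset(ξ_{ij}ξ', 0). -/
namespace Stmt14

variable {V : Type} [DecidableEq V]

/-- The stack encoding of a sequence of names: the `k`-th symbol carries a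
dagger (`true`) iff its name does not reoccur later in the sequence. -/
def stackEnc : List V → List (V × Bool)
  | [] => []
  | X :: ξ => (X, decide (X ∉ ξ)) :: stackEnc ξ

/-- The string `δ(s_D, top, ξ)` pushed for a summand body `ξ` when the control
state is indexed by `D'` (already adjusted for the top symbol): the `k`-th
symbol is daggered iff its name occurs neither in `D'` nor later in `ξ`. -/
def pushStr (D' : Finset V) : List V → List (V × Bool)
  | [] => []
  | X :: ξ => (X, decide (X ∉ D' ∧ X ∉ ξ)) :: pushStr D' ξ

/-- In the CFP-to-PDA construction the stack-encoding function is compatible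
with expansion: for a sequence `ξ = X_j ξ'` and a summand body `ξ_{ij}`,
pushing `δ(s_D, top, ξ_{ij})` on `stack(ξ')` yields `stack(ξ_{ij} ξ')`, and
the new control-state index equals `suffset(ξ_{ij} ξ', 0)`; here
`D = suffset(ξ, 0)` and `top` is daggered iff `X_j ∉ ξ'`, in which case `X_j`
is removed from `D`. -/
theorem stackEnc_compatible (Xj : V) (ξ' ξij : List V) :
    pushStr
        (if Xj ∈ ξ' then (Xj :: ξ').toFinset
          else (Xj :: ξ').toFinset \ {Xj}) ξij ++ stackEnc ξ' =
      stackEnc (ξij ++ ξ') ∧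
    (if Xj ∈ ξ' then (Xj :: ξ').toFinset
        else (Xj :: ξ').toFinset \ {Xj}) ∪ ξij.toFinset =
      (ξij ++ ξ').toFinset := by
  have hD : (if Xj ∈ ξ' then (Xj :: ξ').toFinset
      else (Xj :: ξ').toFinset \ {Xj}) = ξ'.toFinset := by
    split_ifs with h
    · simp [List.toFinset_cons, Finset.insert_eq_self.2 (List.mem_toFinset.2 h)]
    · ext x
      simp only [Finset.mem_sdiff, List.mem_toFinset, List.mem_cons,
        Finset.mem_singleton]
      constructor
      · rintro ⟨hx | hx, hne⟩
        · exact absurd hx hne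
        · exact hx
      · intro hx
        exact ⟨Or.inr hx, fun he => h (he ▸ hx)⟩
  rw [hD]
  constructor
  · induction ξij with
    | nil => rfl
    | cons X t ih =>
      simp only [pushStr, stackEnc, List.cons_append, ih]
      congr 1
      simp [List.mem_append, not_or, and_comm]
  · ext x
    simp [or_comm]

end Stmt14
end

section
/- In the revised semantics, the always-terminating half counter is correctly implemented by nesting and iteration: the process HC = ( ((a+1)^ω(b+1)) • (c+1) )* is divergence-preserving branching bisimilar to C_0, where C_n = a.C_{n+1} + b.B_n + 1, B_n = a.B_{n-1} + 1 (n ≥ 1), B_0 = c.C_0 + 1. -/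
namespace TCPRev

variable {C D : Type}

/-- States of the always-terminating half counter specification:
`C n` and `B n`. -/
inductive CB : Type
  | Cst : ℕ → CB
  | Bst : ℕ → CB

/-- Transitions of the half counter: `C_n →a C_{n+1}`, `C_n →b B_n`,
`B_{n+1} →a B_n`, `B_0 →c C_0`. -/
inductive CBStep (la lb lc : Act C D) : CB → Act C D → CB → Prop
  | countUp (n : ℕ) : CBStep la lb lc (.Cst n) la (.Cst (n + 1))
  | toB (n : ℕ) : CBStep la lb lc (.Cst n) lb (.Bst n)
  | countDown (n : ℕ) : CBStep la lb lc (.Bst (n + 1)) la (.Bst n)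
  | reset : CBStep la lb lc (.Bst 0) lc (.Cst 0)

/-- The disjoint union of the half-counter LTS and the TCP• LTS. -/
def CTr (la lb lc : Act C D) :
    (CB ⊕ Proc C D) → Act C D → (CB ⊕ Proc C D) → Prop
  | .inl s, a, .inl t => CBStep la lb lc s a t
  | .inr p, a, .inr q => Tr p a q
  | _, _, _ => False

/-- Termination on the disjoint union: every state of the half counter
terminates. -/
def CDn : (CB ⊕ Proc C D) → Prop
  | .inl _ => True
  | .inr p => p.term

/-- `p →(a) q` in the combined system. -/
def COptStep (la lb lc : Act C D) (p : CB ⊕ Proc C D) (a : Act C D)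
    (q : CB ⊕ Proc C D) : Prop :=
  CTr la lb lc p a q ∨ (a = .tau ∧ p = q)

/-- τ-reachability in the combined system. -/
def CTauReach (la lb lc : Act C D) : (CB ⊕ Proc C D) → (CB ⊕ Proc C D) → Prop :=
  Relation.ReflTransGen (fun p q => CTr la lb lc p Act.tau q)

/-- Branching bisimulations on the combined system. -/
def CIsBranchingBisim (la lb lc : Act C D)
    (R : (CB ⊕ Proc C D) → (CB ⊕ Proc C D) → Prop) : Prop :=
  Symmetric R ∧ ∀ p q, R p q →
    (∀ a p', CTr la lb lc p a p' →
      ∃ q'' q', CTauReach la lb lc q q'' ∧ COptStep la lb lc q'' a q' ∧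
        R p q'' ∧ R p' q') ∧
    (CDn p → ∃ q', CTauReach la lb lc q q' ∧ CDn q')

/-- Divergence preservation on the combined system. -/
def CDivPres (la lb lc : Act C D)
    (R : (CB ⊕ Proc C D) → (CB ⊕ Proc C D) → Prop) : Prop :=
  ∀ p q, R p q → ∀ f : ℕ → (CB ⊕ Proc C D), f 0 = p →
    (∀ i, CTr la lb lc (f i) Act.tau (f (i + 1))) → (∀ i, R (f i) q) →
    ∃ q', Relation.TransGen (fun u v => CTr la lb lc u Act.tau v) q q' ∧
      ∃ i, R (f i) q'

/-- Divergence-preserving branching bisimilarity on the combined system. -/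
def CDPBBisimilar (la lb lc : Act C D) (p q : CB ⊕ Proc C D) : Prop :=
  ∃ R, CIsBranchingBisim la lb lc R ∧ CDivPres la lb lc R ∧ R p q

/-- The TCP• implementation of the always-terminating half counter:
`HC = ((a+1)^ω(b+1) • (c+1))*`. -/
def HC (la lb lc : Act C D) : Proc C D :=
  Proc.star
    (Proc.seq
      (Proc.nest (Proc.alt (Proc.act la Proc.one) Proc.one)
        (Proc.alt (Proc.act lb Proc.one) Proc.one))
      (Proc.alt (Proc.act lc Proc.one) Proc.one))

section Aux

variable (la lb lc : Act C D)

/-- `a + 1`. -/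
def Aact (l : Act C D) : Proc C D := .alt (.act l .one) .one

/-- `(a+1)^ω(b+1)`. -/
def Nst : Proc C D := .nest (Aact la) (Aact lb)

/-- Pending stacks reached from the nesting after `n+1` `a`-steps. -/
def Ff : ℕ → Proc C D
  | 0 => .seq .one (.seq (Nst la lb) (Aact la))
  | n + 1 => .seq (Ff n) (Aact la)

/-- `(a+1)^n` stacks. -/
def Gg : ℕ → Proc C D
  | 0 => .one
  | n + 1 => .seq (Gg n) (Aact la)

/-- `(x • (c+1)) • HC`. -/
def Stt (x : Proc C D) : Proc C D :=
  .seq (.seq x (Aact lc)) (HC la lb lc)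

lemma trAact {l : Act C D} {a r} : Tr (Aact l) a r ↔ a = l ∧ r = .one := by
  simp [Aact, Tr]

lemma HC_eq : HC la lb lc = .star (.seq (Nst la lb) (Aact lc)) := rfl

lemma trNst : ∀ a r,
    Tr (Nst la lb) a r ↔ (a = la ∧ r = Ff la lb 0) ∨ (a = lb ∧ r = .one) := by
  intro a r
  show (∃ p', Tr (Aact la) a p' ∧ r = _) ∨ Tr (Aact lb) a r ↔ _
  simp only [trAact]
  constructor
  · rintro (⟨p', ⟨ha, hp⟩, hr⟩ | ⟨ha, hr⟩)
    · subst hp; exact Or.inl ⟨ha, hr⟩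
    · exact Or.inr ⟨ha, hr⟩
  · rintro (⟨ha, hr⟩ | ⟨ha, hr⟩)
    · exact Or.inl ⟨.one, ⟨ha, rfl⟩, hr⟩
    · exact Or.inr ⟨ha, hr⟩

lemma NstTrans : Tr (Nst la lb) la (Ff la lb 0) :=
  (trNst la lb _ _).mpr (Or.inl ⟨rfl, rfl⟩)

lemma trSeqOne {q : Proc C D} {a r} : Tr (.seq .one q) a r ↔ Tr q a r := by
  show (∃ p', False ∧ _) ∨ (Proc.term .one ∧ _ ∧ Tr q a r) ↔ _
  simp [Proc.term, Tr]

lemma trSeqLive {p q : Proc C D} {b p₀} (hp : Tr p b p₀) {a r} :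
    Tr (.seq p q) a r ↔ ∃ p', Tr p a p' ∧ r = .seq p' q := by
  show (∃ p', Tr p a p' ∧ r = .seq p' q) ∨ _ ↔ _
  constructor
  · rintro (h | ⟨_, hno, _⟩)
    · exact h
    · exact absurd hp (hno b p₀)
  · exact Or.inl

lemma trFf : ∀ n a r,
    Tr (Ff la lb n) a r ↔
      (a = la ∧ r = Ff la lb (n + 1)) ∨ (a = lb ∧ r = Gg la (n + 1)) := by
  intro n
  induction n with
  | zero =>
      intro a r
      show Tr (.seq .one (.seq (Nst la lb) (Aact la))) a r ↔ _
      rw [trSeqOne, trSeqLive (NstTrans la lb), ]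
      simp only [trNst]
      constructor
      · rintro ⟨p', (⟨ha, hp⟩ | ⟨ha, hp⟩), hr⟩ <;> subst hp
        · exact Or.inl ⟨ha, hr⟩
        · exact Or.inr ⟨ha, hr⟩
      · rintro (⟨ha, hr⟩ | ⟨ha, hr⟩)
        · exact ⟨_, Or.inl ⟨ha, rfl⟩, hr⟩
        · exact ⟨_, Or.inr ⟨ha, rfl⟩, hr⟩
  | succ n ih =>
      intro a r
      have hlive : Tr (Ff la lb n) la (Ff la lb (n + 1)) :=
        (ih la _).mpr (Or.inl ⟨rfl, rfl⟩)
      show Tr (.seq (Ff la lb n) (Aact la)) a r ↔ _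
      rw [trSeqLive hlive]
      constructor
      · rintro ⟨p', hp', hr⟩
        rcases (ih a p').mp hp' with ⟨ha, hp⟩ | ⟨ha, hp⟩ <;> subst hp
        · exact Or.inl ⟨ha, hr⟩
        · exact Or.inr ⟨ha, hr⟩
      · rintro (⟨ha, hr⟩ | ⟨ha, hr⟩)
        · exact ⟨_, (ih a _).mpr (Or.inl ⟨ha, rfl⟩), hr⟩
        · exact ⟨_, (ih a _).mpr (Or.inr ⟨ha, rfl⟩), hr⟩

lemma FfTrans (n) : Tr (Ff la lb n) la (Ff la lb (n + 1)) :=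
  (trFf la lb n _ _).mpr (Or.inl ⟨rfl, rfl⟩)

lemma trGg : ∀ n a r,
    Tr (Gg la n) a r ↔ ∃ m, n = m + 1 ∧ a = la ∧ r = Gg la m := by
  intro n
  induction n with
  | zero => intro a r; show False ↔ _; simp
  | succ n ih =>
      intro a r
      show Tr (.seq (Gg la n) (Aact la)) a r ↔ _
      match n with
      | 0 =>
          show Tr (.seq .one (Aact la)) a r ↔ _
          rw [trSeqOne, trAact]
          constructor
          · rintro ⟨ha, hr⟩; exact ⟨0, rfl, ha, hr⟩
          · rintro ⟨m, hm, ha, hr⟩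
            obtain rfl : m = 0 := by omega
            exact ⟨ha, hr⟩
      | m + 1 =>
          have hlive : Tr (Gg la (m + 1)) la (Gg la m) :=
            (ih la _).mpr ⟨m, rfl, rfl, rfl⟩
          rw [trSeqLive hlive]
          constructor
          · rintro ⟨p', hp', hr⟩
            rcases (ih a p').mp hp' with ⟨k, hk, ha, hp⟩
            obtain rfl : k = m := by omega
            subst hp
            exact ⟨_ + 1, rfl, ha, hr⟩
          · rintro ⟨k, hk, ha, hr⟩
            obtain rfl : k = m + 1 := by omega
            exact ⟨_, (ih a _).mpr ⟨m, rfl, ha, rfl⟩, hr⟩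

lemma GgTrans (n) : Tr (Gg la (n + 1)) la (Gg la n) :=
  (trGg la (n + 1) _ _).mpr ⟨n, rfl, rfl, rfl⟩

lemma trHC : ∀ a r,
    Tr (HC la lb lc) a r ↔
      (a = la ∧ r = Stt la lb lc (Ff la lb 0)) ∨
      (a = lb ∧ r = Stt la lb lc (Gg la 0)) := by
  intro a r
  have hstep : ∀ (b : Act C D) p', Tr (.seq (Nst la lb) (Aact lc)) b p' ↔
      ∃ n', Tr (Nst la lb) b n' ∧ p' = .seq n' (Aact lc) :=
    fun b p' => trSeqLive (NstTrans la lb)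
  show (∃ p', Tr (.seq (Nst la lb) (Aact lc)) a p' ∧ r = _) ↔ _
  constructor
  · rintro ⟨p', hp', hr⟩
    rcases (hstep a p').mp hp' with ⟨n', hn', hp⟩
    subst hp
    rcases (trNst la lb a n').mp hn' with ⟨ha, hn⟩ | ⟨ha, hn⟩ <;> subst hn
    · exact Or.inl ⟨ha, hr⟩
    · exact Or.inr ⟨ha, hr⟩
  · rintro (⟨ha, hr⟩ | ⟨ha, hr⟩)
    · exact ⟨_, (hstep a _).mpr ⟨_, (trNst la lb a _).mpr (Or.inl ⟨ha, rfl⟩),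
        rfl⟩, hr⟩
    · exact ⟨_, (hstep a _).mpr ⟨_, (trNst la lb a _).mpr (Or.inr ⟨ha, rfl⟩),
        rfl⟩, hr⟩

lemma HCTrans : Tr (HC la lb lc) la (Stt la lb lc (Ff la lb 0)) :=
  (trHC la lb lc _ _).mpr (Or.inl ⟨rfl, rfl⟩)

lemma trSttF (n) : ∀ a r,
    Tr (Stt la lb lc (Ff la lb n)) a r ↔
      (a = la ∧ r = Stt la lb lc (Ff la lb (n + 1))) ∨
      (a = lb ∧ r = Stt la lb lc (Gg la (n + 1))) := by
  intro a r
  have hin : ∀ (b : Act C D) p', Tr (.seq (Ff la lb n) (Aact lc)) b p' ↔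
      ∃ p'', Tr (Ff la lb n) b p'' ∧ p' = .seq p'' (Aact lc) :=
    fun b p' => trSeqLive (FfTrans la lb n)
  have h1 : Tr (Proc.seq (Ff la lb n) (Aact lc)) la
      (.seq (Ff la lb (n + 1)) (Aact lc)) :=
    (hin la _).mpr ⟨_, FfTrans la lb n, rfl⟩
  show Tr (.seq (.seq (Ff la lb n) (Aact lc)) (HC la lb lc)) a r ↔ _
  rw [trSeqLive h1]
  constructor
  · rintro ⟨p', hp', hr⟩
    rcases (hin a p').mp hp' with ⟨p'', hp'', hp⟩
    subst hp
    rcases (trFf la lb n a p'').mp hp'' with ⟨ha, hp⟩ | ⟨ha, hp⟩ <;> subst hp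
    · exact Or.inl ⟨ha, hr⟩
    · exact Or.inr ⟨ha, hr⟩
  · rintro (⟨ha, hr⟩ | ⟨ha, hr⟩)
    · exact ⟨_, (hin a _).mpr ⟨_, (trFf la lb n a _).mpr (Or.inl ⟨ha, rfl⟩),
        rfl⟩, hr⟩
    · exact ⟨_, (hin a _).mpr ⟨_, (trFf la lb n a _).mpr (Or.inr ⟨ha, rfl⟩),
        rfl⟩, hr⟩

lemma trSttG0 : ∀ a r,
    Tr (Stt la lb lc (Gg la 0)) a r ↔
      a = lc ∧ r = .seq .one (HC la lb lc) := by
  intro a r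
  have h0 : ∀ (b : Act C D) p', Tr (Proc.seq (Gg la 0) (Aact lc)) b p' ↔
      b = lc ∧ p' = .one := by
    intro b p'
    show Tr (.seq .one (Aact lc)) b p' ↔ _
    rw [trSeqOne, trAact]
  have hlive : Tr (Proc.seq (Gg la 0) (Aact lc)) lc .one :=
    (h0 lc .one).mpr ⟨rfl, rfl⟩
  show Tr (.seq (.seq (Gg la 0) (Aact lc)) (HC la lb lc)) a r ↔ _
  rw [trSeqLive hlive]
  constructor
  · rintro ⟨p', hp', hr⟩
    rcases (h0 a p').mp hp' with ⟨ha, hp⟩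
    subst hp
    exact ⟨ha, hr⟩
  · rintro ⟨ha, hr⟩
    exact ⟨_, (h0 a _).mpr ⟨ha, rfl⟩, hr⟩

lemma trSttG (n) : ∀ a r,
    Tr (Stt la lb lc (Gg la (n + 1))) a r ↔
      a = la ∧ r = Stt la lb lc (Gg la n) := by
  intro a r
  have hin : ∀ (b : Act C D) p', Tr (.seq (Gg la (n + 1)) (Aact lc)) b p' ↔
      ∃ p'', Tr (Gg la (n + 1)) b p'' ∧ p' = .seq p'' (Aact lc) :=
    fun b p' => trSeqLive (GgTrans la n)
  have hlive : Tr (Proc.seq (Gg la (n + 1)) (Aact lc)) la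
      (.seq (Gg la n) (Aact lc)) :=
    (hin la _).mpr ⟨_, GgTrans la n, rfl⟩
  show Tr (.seq (.seq (Gg la (n + 1)) (Aact lc)) (HC la lb lc)) a r ↔ _
  rw [trSeqLive hlive]
  constructor
  · rintro ⟨p', hp', hr⟩
    rcases (hin a p').mp hp' with ⟨p'', hp'', hp⟩
    subst hp
    rcases (trGg la (n + 1) a p'').mp hp'' with ⟨k, hk, ha, hp⟩
    obtain rfl : k = n := by omega
    subst hp
    exact ⟨ha, hr⟩
  · rintro ⟨ha, hr⟩
    exact ⟨_, (hin a _).mpr ⟨_, (trGg la (n + 1) a _).mpr ⟨n, rfl, ha, rfl⟩,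
      rfl⟩, hr⟩

lemma trOneHC {a r} :
    Tr (Proc.seq .one (HC la lb lc)) a r ↔ Tr (HC la lb lc) a r :=
  trSeqOne

lemma termAact {l : Act C D} : (Aact l).term := Or.inr trivial

lemma termFf (n) : (Ff la lb n).term := by
  induction n with
  | zero => exact ⟨trivial, termAact, termAact⟩
  | succ n ih => exact ⟨ih, termAact⟩

lemma termGg (n) : (Gg la n).term := by
  induction n with
  | zero => exact trivial
  | succ n ih => exact ⟨ih, termAact⟩

lemma termStt {x : Proc C D} (hx : x.term) : (Stt la lb lc x).term :=
  ⟨⟨hx, termAact⟩, trivial⟩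

/-- The witnessing relation. -/
inductive Rel : (CB ⊕ Proc C D) → (CB ⊕ Proc C D) → Prop
  | c0 : Rel (.inl (.Cst 0)) (.inr (HC la lb lc))
  | c0' : Rel (.inl (.Cst 0)) (.inr (.seq .one (HC la lb lc)))
  | cn (n : ℕ) : Rel (.inl (.Cst (n + 1))) (.inr (Stt la lb lc (Ff la lb n)))
  | bn (n : ℕ) : Rel (.inl (.Bst n)) (.inr (Stt la lb lc (Gg la n)))

lemma relCDn {p q : CB ⊕ Proc C D}
    (h : Rel la lb lc p q ∨ Rel la lb lc q p) : CDn q := by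
  rcases h with h | h
  · cases h with
    | c0 => exact trivial
    | c0' => exact ⟨trivial, trivial⟩
    | cn n => exact termStt la lb lc (termFf la lb n)
    | bn n => exact termStt la lb lc (termGg la n)
  · cases h <;> exact trivial

lemma relNoTau (hla : la ≠ .tau) (hlb : lb ≠ .tau) (hlc : lc ≠ .tau)
    {p q : CB ⊕ Proc C D} (h : Rel la lb lc p q ∨ Rel la lb lc q p)
    (r : CB ⊕ Proc C D) : ¬ CTr la lb lc p .tau r := by
  intro htau
  rcases h with h | h
  · -- p is a specification state
    have hs : ∃ s, p = Sum.inl s := by cases h <;> exact ⟨_, rfl⟩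
    obtain ⟨s, rfl⟩ := hs
    cases r with
    | inr _ => exact htau
    | inl t =>
        cases htau with
        | countUp n => exact hla rfl
        | toB n => exact hlb rfl
        | countDown n => exact hla rfl
        | reset => exact hlc rfl
  · -- p is an implementation state
    cases r with
    | inl _ => cases h <;> exact htau
    | inr r' =>
        cases h with
        | c0 =>
            rcases (trHC la lb lc _ _).mp htau with ⟨ha, _⟩ | ⟨ha, _⟩
            · exact hla ha.symm
            · exact hlb ha.symm
        | c0' =>
            rcases (trHC la lb lc _ _).mp (trSeqOne.mp htau) with
              ⟨ha, _⟩ | ⟨ha, _⟩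
            · exact hla ha.symm
            · exact hlb ha.symm
        | cn n =>
            rcases (trSttF la lb lc n _ _).mp htau with ⟨ha, _⟩ | ⟨ha, _⟩
            · exact hla ha.symm
            · exact hlb ha.symm
        | bn n =>
            match n, htau with
            | 0, htau =>
                exact hlc ((trSttG0 la lb lc _ _).mp htau).1.symm
            | m + 1, htau =>
                exact hla ((trSttG la lb lc m _ _).mp htau).1.symm

end Aux

/-- In the revised semantics the always-terminating half counter is correctly
implemented by nesting and iteration: `HC` is divergence-preserving branching
bisimilar to `C₀`. -/
theorem halfCounter_correct {C D : Type} (la lb lc : Act C D)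
    (hla : la ≠ .tau) (hlb : lb ≠ .tau) (hlc : lc ≠ .tau)
    (hab : la ≠ lb) (hac : la ≠ lc) (hbc : lb ≠ lc) :
    CDPBBisimilar la lb lc (Sum.inl (CB.Cst 0)) (Sum.inr (HC la lb lc)) := by
  refine ⟨fun p q => Rel la lb lc p q ∨ Rel la lb lc q p,
    ⟨fun p q h => h.symm, ?_⟩, ?_, Or.inl Rel.c0⟩
  · -- the branching bisimulation conditions
    intro p q hpq
    refine ⟨?_, fun _ => ⟨q, Relation.ReflTransGen.refl, relCDn la lb lc hpq⟩⟩
    intro a p' htr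
    rcases hpq with h | h
    · -- specification step, implementation responds
      cases h with
      | c0 =>
          cases p' with
          | inr _ => exact htr.elim
          | inl t =>
              cases htr with
              | countUp n =>
                  exact ⟨_, .inr (Stt la lb lc (Ff la lb 0)),
                    Relation.ReflTransGen.refl, Or.inl (HCTrans la lb lc),
                    Or.inl Rel.c0, Or.inl (Rel.cn 0)⟩
              | toB n =>
                  exact ⟨_, .inr (Stt la lb lc (Gg la 0)),
                    Relation.ReflTransGen.refl,
                    Or.inl ((trHC la lb lc _ _).mpr (Or.inr ⟨rfl, rfl⟩)),
                    Or.inl Rel.c0, Or.inl (Rel.bn 0)⟩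
      | c0' =>
          cases p' with
          | inr _ => exact htr.elim
          | inl t =>
              cases htr with
              | countUp n =>
                  exact ⟨_, .inr (Stt la lb lc (Ff la lb 0)),
                    Relation.ReflTransGen.refl,
                    Or.inl (trSeqOne.mpr (HCTrans la lb lc)),
                    Or.inl Rel.c0', Or.inl (Rel.cn 0)⟩
              | toB n =>
                  exact ⟨_, .inr (Stt la lb lc (Gg la 0)),
                    Relation.ReflTransGen.refl,
                    Or.inl (trSeqOne.mpr
                      ((trHC la lb lc _ _).mpr (Or.inr ⟨rfl, rfl⟩))),
                    Or.inl Rel.c0', Or.inl (Rel.bn 0)⟩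
      | cn n =>
          cases p' with
          | inr _ => exact htr.elim
          | inl t =>
              cases htr with
              | countUp m =>
                  exact ⟨_, .inr (Stt la lb lc (Ff la lb (n + 1))),
                    Relation.ReflTransGen.refl,
                    Or.inl ((trSttF la lb lc n _ _).mpr (Or.inl ⟨rfl, rfl⟩)),
                    Or.inl (Rel.cn n), Or.inl (Rel.cn (n + 1))⟩
              | toB m =>
                  exact ⟨_, .inr (Stt la lb lc (Gg la (n + 1))),
                    Relation.ReflTransGen.refl,
                    Or.inl ((trSttF la lb lc n _ _).mpr (Or.inr ⟨rfl, rfl⟩)),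
                    Or.inl (Rel.cn n), Or.inl (Rel.bn (n + 1))⟩
      | bn n =>
          cases p' with
          | inr _ => exact htr.elim
          | inl t =>
              cases htr with
              | countDown m =>
                  exact ⟨_, .inr (Stt la lb lc (Gg la m)),
                    Relation.ReflTransGen.refl,
                    Or.inl ((trSttG la lb lc m _ _).mpr ⟨rfl, rfl⟩),
                    Or.inl (Rel.bn (m + 1)), Or.inl (Rel.bn m)⟩
              | reset =>
                  exact ⟨_, .inr (.seq .one (HC la lb lc)),
                    Relation.ReflTransGen.refl,
                    Or.inl ((trSttG0 la lb lc _ _).mpr ⟨rfl, rfl⟩),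
                    Or.inl (Rel.bn 0), Or.inl Rel.c0'⟩
    · -- implementation step, specification responds
      cases h with
      | c0 =>
          cases p' with
          | inl _ => exact htr.elim
          | inr r =>
              rcases (trHC la lb lc a r).mp htr with ⟨ha, hr⟩ | ⟨ha, hr⟩ <;>
                subst ha <;> subst hr
              · exact ⟨_, .inl (.Cst 1), Relation.ReflTransGen.refl,
                  Or.inl (CBStep.countUp 0), Or.inr Rel.c0, Or.inr (Rel.cn 0)⟩
              · exact ⟨_, .inl (.Bst 0), Relation.ReflTransGen.refl,
                  Or.inl (CBStep.toB 0), Or.inr Rel.c0, Or.inr (Rel.bn 0)⟩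
      | c0' =>
          cases p' with
          | inl _ => exact htr.elim
          | inr r =>
              rcases (trHC la lb lc a r).mp (trSeqOne.mp htr) with
                ⟨ha, hr⟩ | ⟨ha, hr⟩ <;> subst ha <;> subst hr
              · exact ⟨_, .inl (.Cst 1), Relation.ReflTransGen.refl,
                  Or.inl (CBStep.countUp 0), Or.inr Rel.c0', Or.inr (Rel.cn 0)⟩
              · exact ⟨_, .inl (.Bst 0), Relation.ReflTransGen.refl,
                  Or.inl (CBStep.toB 0), Or.inr Rel.c0', Or.inr (Rel.bn 0)⟩
      | cn n =>
          cases p' with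
          | inl _ => exact htr.elim
          | inr r =>
              rcases (trSttF la lb lc n a r).mp htr with
                ⟨ha, hr⟩ | ⟨ha, hr⟩ <;> subst ha <;> subst hr
              · exact ⟨_, .inl (.Cst (n + 2)), Relation.ReflTransGen.refl,
                  Or.inl (CBStep.countUp (n + 1)), Or.inr (Rel.cn n),
                  Or.inr (Rel.cn (n + 1))⟩
              · exact ⟨_, .inl (.Bst (n + 1)), Relation.ReflTransGen.refl,
                  Or.inl (CBStep.toB (n + 1)), Or.inr (Rel.cn n),
                  Or.inr (Rel.bn (n + 1))⟩
      | bn n =>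
          cases p' with
          | inl _ => exact htr.elim
          | inr r =>
              match n, htr with
              | 0, htr =>
                  obtain ⟨ha, hr⟩ := (trSttG0 la lb lc a r).mp htr
                  subst ha; subst hr
                  exact ⟨_, .inl (.Cst 0), Relation.ReflTransGen.refl,
                    Or.inl CBStep.reset, Or.inr (Rel.bn 0), Or.inr Rel.c0'⟩
              | m + 1, htr =>
                  obtain ⟨ha, hr⟩ := (trSttG la lb lc m a r).mp htr
                  subst ha; subst hr
                  exact ⟨_, .inl (.Bst m), Relation.ReflTransGen.refl,
                    Or.inl (CBStep.countDown m), Or.inr (Rel.bn (m + 1)),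
                    Or.inr (Rel.bn m)⟩
  · -- divergence preservation: no related state has a τ-transition
    intro p q hpq f hf0 hstep _
    exfalso
    have h1 := hstep 0
    rw [hf0] at h1
    exact relNoTau la lb lc hla hlb hlc hpq (f 1) h1

end TCPRev
end
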